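/- arXiv:0902.1261 — 10 statements merged into one kernel-verified Lean document; each statement's English description precedes it below -/
import Mathlib

section
/- Let d be a dissimilarity on a nonempty finite set X and let ≺ be a linear order on X. Then d̃_≺ is a dissimilarity on X, the order ≺ is compatible with d̃_≺ (in particular d̃_≺ is Robinsonian), ‖d − d̃_≺‖∞ ≤ ε̃_≺, and for every dissimilarity d' on X such that ≺ is compatible with d' one has ‖d − d̃_≺‖∞ ≤ ‖d − d'‖∞; that is, d̃_≺ minimizes ‖d − d'‖∞ among all dissimilarities d' compatible with ≺. -/
open Finset

variable {X : Type*}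

/-- A dissimilarity on `X`: symmetric, nonnegative, zero on the diagonal. -/
def IsDissimilarity (d : X → X → ℝ) : Prop :=
  (∀ x y, d x y = d y x) ∧ (∀ x y, 0 ≤ d x y) ∧ (∀ x, d x x = 0)

/-- Here `le` stands for the reflexive closure `⪯` of a linear order `≺` on `X`.
`EpsCompatible d le ε` says that the order is `ε`-compatible with `d`, i.e.
`d u v ≤ d x y + 2ε` whenever `x ⪯ u ⪯ v ⪯ y`. -/
def EpsCompatible (d : X → X → ℝ) (le : X → X → Prop) (ε : ℝ) : Prop :=
  ∀ x u v y, le x u → le u v → le v y → d u v ≤ d x y + 2 * ε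

/-- The `l∞`-distance `‖d - d'‖∞ = max_{x,y} |d x y - d' x y|`. -/
noncomputable def linfDist [Fintype X] [Nonempty X] (d d' : X → X → ℝ) : ℝ :=
  (Finset.univ : Finset (X × X)).sup' Finset.univ_nonempty
    fun p => |d p.1 p.2 - d' p.1 p.2|

/-- A dissimilarity is Robinsonian if it admits a compatible linear order. -/
def IsRobinsonian (d : X → X → ℝ) : Prop :=
  ∃ le : X → X → Prop, IsLinearOrder X le ∧ EpsCompatible d le 0

/-- `ď_≺ x y = max { d u v : x ⪯ u ⪯ v ⪯ y }`, extended symmetrically to all pairs. -/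
noncomputable def dCheck (d : X → X → ℝ) (le : X → X → Prop) (x y : X) : ℝ :=
  sSup {r | ∃ u v, ((le x u ∧ le u v ∧ le v y) ∨ (le y u ∧ le u v ∧ le v x)) ∧ r = d u v}

/-- `ε̃_≺ = ½ ‖d - ď_≺‖∞`. -/
noncomputable def epsTilde [Fintype X] [Nonempty X] (d : X → X → ℝ) (le : X → X → Prop) : ℝ :=
  linfDist d (dCheck d le) / 2

/-- `d̃_≺ x y = max (ď_≺ x y - ε̃_≺) 0` for `x ≠ y`, and `d̃_≺ x x = 0`. -/
noncomputable def dTilde [Fintype X] [Nonempty X] [DecidableEq X]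
    (d : X → X → ℝ) (le : X → X → Prop) (x y : X) : ℝ :=
  if x = y then 0 else max (dCheck d le x y - epsTilde d le) 0


section Aux

variable (d : X → X → ℝ) (le : X → X → Prop)

/-- The set whose supremum defines `dCheck`. -/
def checkSet (x y : X) : Set ℝ :=
  {r | ∃ u v, ((le x u ∧ le u v ∧ le v y) ∨ (le y u ∧ le u v ∧ le v x)) ∧ r = d u v}

lemma dCheck_eq_sSup (x y : X) : dCheck d le x y = sSup (checkSet d le x y) := rfl

lemma checkSet_finite [Fintype X] (x y : X) : (checkSet d le x y).Finite := by
  apply Set.Finite.subset (Set.finite_range (fun p : X × X => d p.1 p.2))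
  rintro r ⟨u, v, _, rfl⟩
  exact ⟨(u, v), rfl⟩

lemma mem_checkSet (hle : IsLinearOrder X le) (hsymm : ∀ x y, d x y = d y x) (x y : X) :
    d x y ∈ checkSet d le x y := by
  haveI := hle
  rcases total_of le x y with h | h
  · exact ⟨x, y, Or.inl ⟨refl_of le x, h, refl_of le y⟩, rfl⟩
  · exact ⟨y, x, Or.inr ⟨refl_of le y, h, refl_of le x⟩, hsymm x y⟩

lemma checkSet_symm (x y : X) : checkSet d le x y = checkSet d le y x := by
  ext r
  constructor <;> rintro ⟨u, v, h, rfl⟩ <;> exact ⟨u, v, h.symm, rfl⟩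

lemma checkSet_subset (hle : IsLinearOrder X le) {x u v y : X}
    (hxu : le x u) (huv : le u v) (hvy : le v y) :
    checkSet d le u v ⊆ checkSet d le x y := by
  haveI := hle
  rintro r ⟨a, b, hab | hab, rfl⟩
  · exact ⟨a, b, Or.inl ⟨trans_of le hxu hab.1, hab.2.1,
      trans_of le hab.2.2 hvy⟩, rfl⟩
  · -- le v a, le a b, le b u, with le u v, so a = b
    have hba : le b a := trans_of le hab.2.2 (trans_of le huv hab.1)
    have hEq : a = b := antisymm_of le hab.2.1 hba
    subst hEq
    exact ⟨a, a, Or.inl ⟨trans_of le hxu (trans_of le huv hab.1), refl_of le a,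
      trans_of le (trans_of le hab.2.2 huv) hvy⟩, rfl⟩

lemma abs_le_linfDist [Fintype X] [Nonempty X] (d' : X → X → ℝ) (x y : X) :
    |d x y - d' x y| ≤ linfDist d d' := by
  unfold linfDist
  exact Finset.le_sup' (fun p : X × X => |d p.1 p.2 - d' p.1 p.2|) (Finset.mem_univ (x, y))

lemma linfDist_le [Fintype X] [Nonempty X] {d' : X → X → ℝ} {c : ℝ}
    (h : ∀ x y, |d x y - d' x y| ≤ c) : linfDist d d' ≤ c :=
  Finset.sup'_le _ _ fun p _ => h p.1 p.2

end Aux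

/-- `d̃_≺` is a dissimilarity, compatible with `≺` (hence Robinsonian), within `ε̃_≺` of `d`,
and minimizes `‖d - d'‖∞` among all dissimilarities `d'` compatible with `≺`. -/
theorem dTilde_optimal [Fintype X] [Nonempty X] [DecidableEq X]
    (d : X → X → ℝ) (hd : IsDissimilarity d)
    (le : X → X → Prop) (hle : IsLinearOrder X le) :
    IsDissimilarity (dTilde d le) ∧
    EpsCompatible (dTilde d le) le 0 ∧
    IsRobinsonian (dTilde d le) ∧
    linfDist d (dTilde d le) ≤ epsTilde d le ∧
    ∀ d' : X → X → ℝ, IsDissimilarity d' → EpsCompatible d' le 0 →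
      linfDist d (dTilde d le) ≤ linfDist d d' := by

  haveI := hle
  obtain ⟨hdsymm, hdnn, hddiag⟩ := hd
  set ε := epsTilde d le with hεdef
  have hBdd : ∀ x y, BddAbove (checkSet d le x y) :=
    fun x y => (checkSet_finite d le x y).bddAbove
  have hmem : ∀ x y, d x y ∈ checkSet d le x y := mem_checkSet d le hle hdsymm
  have hdle : ∀ x y, d x y ≤ dCheck d le x y := fun x y =>
    le_csSup (hBdd x y) (hmem x y)
  have hcnn : ∀ x y, 0 ≤ dCheck d le x y := fun x y => (hdnn x y).trans (hdle x y)
  have h2ε : ∀ x y, dCheck d le x y ≤ d x y + 2 * ε := by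
    intro x y
    have h1 : |d x y - dCheck d le x y| ≤ linfDist d (dCheck d le) :=
      abs_le_linfDist d (dCheck d le) x y
    have h2 : -(linfDist d (dCheck d le)) ≤ d x y - dCheck d le x y := (abs_le.mp h1).1
    have : ε = linfDist d (dCheck d le) / 2 := rfl
    linarith
  have hε0 : 0 ≤ ε := by
    obtain ⟨x0⟩ := (inferInstance : Nonempty X)
    have h1 : |d x0 x0 - dCheck d le x0 x0| ≤ linfDist d (dCheck d le) :=
      abs_le_linfDist d (dCheck d le) x0 x0
    have : ε = linfDist d (dCheck d le) / 2 := rfl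
    have := abs_nonneg (d x0 x0 - dCheck d le x0 x0)
    linarith
  have hcsymm : ∀ x y, dCheck d le x y = dCheck d le y x := by
    intro x y
    rw [dCheck_eq_sSup, dCheck_eq_sSup, checkSet_symm]
  have hcmono : ∀ x u v y, le x u → le u v → le v y →
      dCheck d le u v ≤ dCheck d le x y := by
    intro x u v y hxu huv hvy
    exact csSup_le_csSup (hBdd x y) ⟨_, hmem u v⟩ (checkSet_subset d le hle hxu huv hvy)
  have htnn : ∀ x y, 0 ≤ dTilde d le x y := by
    intro x y
    unfold dTilde
    split
    · exact le_rfl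
    · exact le_max_right _ _
  have htdiss : IsDissimilarity (dTilde d le) := by
    refine ⟨?_, htnn, fun x => if_pos rfl⟩
    intro x y
    rcases eq_or_ne x y with rfl | hxy
    · rfl
    · unfold dTilde
      rw [if_neg hxy, if_neg (Ne.symm hxy), hcsymm]
  have htcomp : EpsCompatible (dTilde d le) le 0 := by
    intro x u v y hxu huv hvy
    rcases eq_or_ne u v with rfl | huvne
    · simpa [dTilde] using htnn x y
    · have hxy : x ≠ y := by
        rintro rfl
        exact huvne (antisymm_of le huv (trans_of le hvy hxu))
      have hkey : dCheck d le u v ≤ dCheck d le x y := hcmono x u v y hxu huv hvy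
      unfold dTilde
      rw [if_neg huvne, if_neg hxy]
      have : max (dCheck d le u v - ε) 0 ≤ max (dCheck d le x y - ε) 0 :=
        max_le_max (by linarith) le_rfl
      linarith
  have hε : linfDist d (dTilde d le) ≤ ε := by
    apply linfDist_le
    intro x y
    rcases eq_or_ne x y with rfl | hxy
    · simp [dTilde, hddiag, hε0]
    · rw [abs_le]
      have hub : dTilde d le x y ≤ d x y + ε := by
        unfold dTilde
        rw [if_neg hxy]
        exact max_le (by linarith [h2ε x y]) (by linarith [hdnn x y])
      have hlb : dCheck d le x y - ε ≤ dTilde d le x y := by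
        unfold dTilde
        rw [if_neg hxy]
        exact le_max_left _ _
      constructor
      · linarith
      · linarith [hdle x y]
  refine ⟨htdiss, htcomp, ⟨le, hle, htcomp⟩, hε, ?_⟩
  intro d' hd' hc
  set δ := linfDist d d' with hδdef
  have hεδ : ε ≤ δ := by
    have hmain : linfDist d (dCheck d le) ≤ 2 * δ := by
      apply linfDist_le
      intro x y
      have habs : |d x y - dCheck d le x y| = dCheck d le x y - d x y := by
        rw [abs_sub_comm]
        exact abs_of_nonneg (by linarith [hdle x y])
      rw [habs]
      obtain ⟨u, v, hcond, hEq⟩ :=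
        (Set.Nonempty.csSup_mem ⟨_, hmem x y⟩ (checkSet_finite d le x y) :
          dCheck d le x y ∈ checkSet d le x y)
      rw [show dCheck d le x y = d u v from hEq]
      have h1 : d u v - d' u v ≤ δ := (abs_le.mp (abs_le_linfDist d d' u v)).2
      have h2 : -δ ≤ d x y - d' x y := (abs_le.mp (abs_le_linfDist d d' x y)).1
      rcases hcond with ⟨hxu, huv, hvy⟩ | ⟨hyu, huv, hvx⟩
      · have h3 : d' u v ≤ d' x y + 2 * 0 := hc x u v y hxu huv hvy
        linarith
      · have h3 : d' u v ≤ d' y x + 2 * 0 := hc y u v x hyu huv hvx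
        have h4 : d' y x = d' x y := hd'.1 y x
        linarith
    have : ε = linfDist d (dCheck d le) / 2 := rfl
    linarith
  exact hε.trans hεδ
end

section
/- Let d be a dissimilarity on a nonempty finite set X and let ≺ be a linear order on X. Then every dissimilarity d' on X such that ≺ is compatible with d' satisfies ‖d − d'‖∞ ≥ ½‖d − ď_≺‖∞ = ε̃_≺. -/
open Finset

variable {X : Type*}

lemma dCheck_spec [Fintype X] (d : X → X → ℝ) (le : X → X → Prop)
    (hle : IsLinearOrder X le) (x y : X) :
    (∃ u v, ((le x u ∧ le u v ∧ le v y) ∨ (le y u ∧ le u v ∧ le v x)) ∧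
      dCheck d le x y = d u v) ∧
    (∀ u v, ((le x u ∧ le u v ∧ le v y) ∨ (le y u ∧ le u v ∧ le v x)) →
      d u v ≤ dCheck d le x y) := by
  haveI := hle
  set S := {r | ∃ u v, ((le x u ∧ le u v ∧ le v y) ∨ (le y u ∧ le u v ∧ le v x)) ∧ r = d u v} with hS
  have hfin : S.Finite := by
    apply Set.Finite.subset (Set.finite_range (fun p : X × X => d p.1 p.2))
    rintro r ⟨u, v, _, rfl⟩
    exact ⟨(u, v), rfl⟩
  have hne : S.Nonempty := by
    rcases total_of le x y with h | h
    · exact ⟨d x y, x, y, Or.inl ⟨refl_of le x, h, refl_of le y⟩, rfl⟩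
    · exact ⟨d y x, y, x, Or.inr ⟨refl_of le y, h, refl_of le x⟩, rfl⟩
  constructor
  · obtain ⟨u, v, hc, hr⟩ := hne.csSup_mem hfin
    exact ⟨u, v, hc, hr⟩
  · intro u v hc
    exact le_csSup hfin.bddAbove ⟨u, v, hc, rfl⟩

/-- Every dissimilarity `d'` compatible with the linear order `≺` satisfies
`‖d - d'‖∞ ≥ ½‖d - ď_≺‖∞ = ε̃_≺`. -/
theorem linfDist_ge_epsTilde [Fintype X] [Nonempty X]
    (d : X → X → ℝ) (hd : IsDissimilarity d)
    (le : X → X → Prop) (hle : IsLinearOrder X le) :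
    epsTilde d le = linfDist d (dCheck d le) / 2 ∧
    ∀ d' : X → X → ℝ, IsDissimilarity d' → EpsCompatible d' le 0 →
      linfDist d (dCheck d le) / 2 ≤ linfDist d d' := by
  refine ⟨rfl, fun d' hd' hcomp => ?_⟩
  haveI := hle
  set δ := linfDist d d' with hδ
  have hpair : ∀ a b : X, |d a b - d' a b| ≤ δ := fun a b =>
    Finset.le_sup' (fun p : X × X => |d p.1 p.2 - d' p.1 p.2|) (Finset.mem_univ (a, b))
  have key : linfDist d (dCheck d le) ≤ 2 * δ := by
    apply Finset.sup'_le
    rintro ⟨x, y⟩ -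
    simp only
    obtain ⟨⟨u, v, hc, hr⟩, hub⟩ := dCheck_spec d le hle x y
    have hge : d x y ≤ dCheck d le x y := by
      rcases total_of le x y with h | h
      · exact hub x y (Or.inl ⟨refl_of le x, h, refl_of le y⟩)
      · rw [hd.1 x y]
        exact hub y x (Or.inr ⟨refl_of le y, h, refl_of le x⟩)
    rw [abs_sub_comm, abs_of_nonneg (by linarith)]
    have h1 : d u v - d' u v ≤ δ := (abs_le.mp (hpair u v)).2 |>.trans_eq' rfl |> fun h => h
    have h2 : d' x y - d x y ≤ δ := by
      have := (abs_le.mp (hpair x y)).1; linarith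
    have h3 : d' u v ≤ d' x y := by
      rcases hc with ⟨h1', h2', h3'⟩ | ⟨h1', h2', h3'⟩
      · have := hcomp x u v y h1' h2' h3'; linarith
      · have := hcomp y u v x h1' h2' h3'
        rw [hd'.1 x y]; linarith
    have h4 : d u v - d' u v ≤ δ := by
      have := (abs_le.mp (hpair u v)).2; linarith
    linarith [hr ▸ (by linarith : d u v - d x y ≤ 2 * δ)]
  linarith
end

section
/- Let d be a dissimilarity on a nonempty finite set X and let ε ≥ 0 be a real number. Then d admits an ε-compatible linear order if and only if there exists a Robinsonian dissimilarity d_R on X with ‖d − d_R‖∞ ≤ ε. -/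
open Finset

variable {X : Type*}

open scoped Classical in
/-- Auxiliary Robinsonian approximation: `max 0 (max over x ⪯ u ⪯ v ⪯ y of d u v - ε)`. -/
noncomputable def dRaux [Fintype X] (d : X → X → ℝ) (le : X → X → Prop) (ε : ℝ)
    (x y : X) : ℝ :=
  (Finset.univ.filter (fun p : X × X => le x p.1 ∧ le p.1 p.2 ∧ le p.2 y)).fold max 0
    (fun p => d p.1 p.2 - ε)

lemma dRaux_nonneg [Fintype X] (d : X → X → ℝ) (le : X → X → Prop) (ε : ℝ)
    (x y : X) : 0 ≤ dRaux d le ε x y := by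
  classical
  rw [dRaux, Finset.le_fold_max]
  exact Or.inl le_rfl

lemma le_dRaux [Fintype X] (d : X → X → ℝ) (le : X → X → Prop) (ε : ℝ)
    {x u v y : X} (h1 : le x u) (h2 : le u v) (h3 : le v y) :
    d u v - ε ≤ dRaux d le ε x y := by
  classical
  rw [dRaux, Finset.le_fold_max]
  exact Or.inr ⟨(u, v), by simp [h1, h2, h3], le_rfl⟩

lemma dRaux_le [Fintype X] (d : X → X → ℝ) (le : X → X → Prop) (ε : ℝ)
    {x y : X} {c : ℝ} (hc : 0 ≤ c)
    (h : ∀ u v, le x u → le u v → le v y → d u v - ε ≤ c) :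
    dRaux d le ε x y ≤ c := by
  classical
  rw [dRaux, Finset.fold_max_le]
  refine ⟨hc, fun p hp => ?_⟩
  simp only [Finset.mem_filter] at hp
  exact h p.1 p.2 hp.2.1 hp.2.2.1 hp.2.2.2

lemma dRaux_mono [Fintype X] (d : X → X → ℝ) (le : X → X → Prop)
    (htrans : ∀ a b c, le a b → le b c → le a c) (ε : ℝ)
    {x u v y : X} (h1 : le x u) (h3 : le v y) :
    dRaux d le ε u v ≤ dRaux d le ε x y :=
  dRaux_le d le ε (dRaux_nonneg d le ε x y) fun a b ha hab hb =>
    le_dRaux d le ε (htrans _ _ _ h1 ha) hab (htrans _ _ _ hb h3)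


theorem epsCompatible_iff_close_robinsonian' [Fintype X] [Nonempty X]
    (d : X → X → ℝ) (hd : IsDissimilarity d) (ε : ℝ) (hε : 0 ≤ ε) :
    (∃ le : X → X → Prop, IsLinearOrder X le ∧ EpsCompatible d le ε) ↔
      (∃ dR : X → X → ℝ, IsDissimilarity dR ∧ IsRobinsonian dR ∧ linfDist d dR ≤ ε) := by
  obtain ⟨hsymm, hnn, hdiag⟩ := hd
  constructor
  · rintro ⟨le, hlin, hcomp⟩
    classical
    have hrefl : ∀ a, le a a := fun a => hlin.refl a
    have htrans : ∀ a b c, le a b → le b c → le a c := fun a b c => hlin.trans a b c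
    have hanti : ∀ a b, le a b → le b a → a = b := fun a b => hlin.antisymm a b
    have htot : ∀ a b, le a b ∨ le b a := fun a b => hlin.total a b
    set A : X → X → ℝ := dRaux d le ε with hA
    set dR : X → X → ℝ := fun x y => if le x y then A x y else A y x with hdR
    have hRle : ∀ {x y}, le x y → dR x y = A x y := by
      intro x y hxy
      by_cases h : le x y
      · simp [hdR, h]
      · exact absurd hxy h
    have hRsym : ∀ x y, dR x y = dR y x := by
      intro x y
      rcases htot x y with h | h
      · rcases Classical.em (le y x) with h' | h'
        · obtain rfl := hanti x y h h'
          rfl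
        · simp [hdR, h, h']
      · rcases Classical.em (le x y) with h' | h'
        · obtain rfl := hanti x y h' h
          rfl
        · simp [hdR, h, h']
    have hRdiag : ∀ x, dR x x = 0 := by
      intro x
      rw [hRle (hrefl x)]
      refine le_antisymm ?_ (dRaux_nonneg d le ε x x)
      refine dRaux_le d le ε le_rfl fun u v hu huv hv => ?_
      obtain rfl := hanti x u hu (htrans _ _ _ huv hv)
      obtain rfl := hanti x v (htrans _ _ _ hu huv) hv
      simp [hdiag x, hε]
    refine ⟨dR, ⟨hRsym, fun x y => ?_, hRdiag⟩, ⟨le, hlin, ?_⟩, ?_⟩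
    · rcases htot x y with h | h
      · rw [hRle h]; exact dRaux_nonneg d le ε x y
      · rw [hRsym, hRle h]; exact dRaux_nonneg d le ε y x
    · intro x u v y hxu huv hvy
      rw [hRle huv, hRle (htrans _ _ _ hxu (htrans _ _ _ huv hvy))]
      have := dRaux_mono d le htrans ε hxu hvy
      linarith
    · refine Finset.sup'_le _ _ fun p _ => ?_
      have key : ∀ a b : X, le a b → |d a b - dR a b| ≤ ε := by
        intro a b h
        rw [hRle h, abs_sub_le_iff]
        constructor
        · have := le_dRaux d le ε (hrefl a) h (hrefl b)
          linarith
        · have hub : A a b ≤ d a b + ε := by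
            refine dRaux_le d le ε (by linarith [hnn a b]) fun u v hu huv hv => ?_
            have := hcomp _ _ _ _ hu huv hv
            linarith
          linarith
      rcases htot p.1 p.2 with h | h
      · exact key _ _ h
      · rw [hsymm, hRsym]
        exact key _ _ h
  · rintro ⟨dR, ⟨hRsym, hRnn, hRdiag⟩, ⟨le, hlin, hcomp⟩, hclose⟩
    refine ⟨le, hlin, fun x u v y hxu huv hvy => ?_⟩
    rw [linfDist] at hclose
    have hb : ∀ a b : X, |d a b - dR a b| ≤ ε := fun a b =>
      le_trans (Finset.le_sup' (fun p : X × X => |d p.1 p.2 - dR p.1 p.2|) (Finset.mem_univ ((a, b) : X × X))) hclose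
    have h1 := abs_le.mp (hb u v)
    have h2 := abs_le.mp (hb x y)
    have h3 := hcomp x u v y hxu huv hvy
    linarith

/-- `d` admits an `ε`-compatible linear order iff there is a Robinsonian dissimilarity
`d_R` with `‖d - d_R‖∞ ≤ ε`. -/
theorem epsCompatible_iff_close_robinsonian [Fintype X] [Nonempty X]
    (d : X → X → ℝ) (hd : IsDissimilarity d) (ε : ℝ) (hε : 0 ≤ ε) :
    (∃ le : X → X → Prop, IsLinearOrder X le ∧ EpsCompatible d le ε) ↔
      (∃ dR : X → X → ℝ, IsDissimilarity dR ∧ IsRobinsonian dR ∧ linfDist d dR ≤ ε) := by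
  exact epsCompatible_iff_close_robinsonian' d hd ε hε
end

section
/- Every ultrametric on a nonempty finite set X is Robinsonian, i.e., if a dissimilarity d on X satisfies d(x,z) ≤ max{ d(x,y), d(y,z) } for all x,y,z ∈ X, then d admits a compatible linear order. -/
open Finset

variable {X : Type*}

section UltraAux

variable {X : Type*} [Fintype X] [LinearOrder X] (d : X → X → ℝ)

/-- The open ball, with the center inserted so it is always nonempty. -/
noncomputable def uball (x : X) (r : ℝ) : Finset X :=
  insert x (Finset.univ.filter fun z => d x z < r)

lemma mem_uball {x z : X} {r : ℝ} : z ∈ uball d x r ↔ z = x ∨ d x z < r := by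
  simp [uball]

/-- The least element of the ball. -/
noncomputable def uleader (x : X) (r : ℝ) : X :=
  (uball d x r).min' ⟨x, by simp [mem_uball]⟩

variable (hsym : ∀ x y, d x y = d y x) (hu : ∀ x y z : X, d x z ≤ max (d x y) (d y z))

include hsym hu in
lemma uball_eq {x y : X} {r : ℝ} (h : d x y < r) : uball d x r = uball d y r := by
  have key : ∀ a b : X, d a b < r → ∀ z, z ∈ uball d a r → z ∈ uball d b r := by
    intro a b hab z hz
    rw [mem_uball] at hz ⊢
    rcases hz with rfl | hz
    · right; rw [hsym b z]; exact hab
    · right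
      calc d b z ≤ max (d b a) (d a z) := hu b a z
        _ < r := max_lt (by rw [hsym b a]; exact hab) hz
  apply Finset.Subset.antisymm
  · exact fun z hz => key x y h z hz
  · exact fun z hz => key y x (by rw [hsym y x]; exact h) z hz

include hsym hu in
lemma uleader_eq {x y : X} {r : ℝ} (h : d x y < r) : uleader d x r = uleader d y r := by
  unfold uleader
  congr 1
  exact uball_eq d hsym hu h

lemma uleader_mem (x : X) (r : ℝ) : uleader d x r ∈ uball d x r :=
  Finset.min'_mem _ _

include hsym hu in
lemma uleader_ne {x y : X} (hxy : x ≠ y) (hr : 0 < d x y) :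
    uleader d x (d x y) ≠ uleader d y (d x y) := by
  intro h
  have h1 := uleader_mem d x (d x y)
  have h2 := uleader_mem d y (d x y)
  rw [mem_uball] at h1 h2
  rw [h] at h1
  set w := uleader d y (d x y) with hw
  rcases h1 with h1 | h1 <;> rcases h2 with h2 | h2
  · exact hxy (h1 ▸ h2 ▸ rfl)
  · rw [h1, hsym] at h2; exact lt_irrefl _ h2
  · rw [h2] at h1; exact lt_irrefl _ h1
  · have : d x y ≤ max (d x w) (d w y) := hu x w y
    have : d x y < d x y := lt_of_le_of_lt this (max_lt h1 (by rw [hsym w y]; exact h2))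
    exact lt_irrefl _ this

/-- The strict order: compare leaders at the separation level, break ties
(distance zero) with the base order. -/
def rlt (x y : X) : Prop :=
  (0 < d x y ∧ uleader d x (d x y) < uleader d y (d x y)) ∨
    (d x y = 0 ∧ x ≠ y ∧ x < y)

include hsym in
lemma rlt_asymm {x y : X} (h1 : rlt d x y) (h2 : rlt d y x) : False := by
  rcases h1 with ⟨hp, hl⟩ | ⟨hz, _, hlt⟩ <;> rcases h2 with ⟨hp', hl'⟩ | ⟨hz', _, hlt'⟩
  · rw [hsym y x] at hl'
    exact lt_irrefl _ (hl.trans hl')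
  · rw [hsym y x] at hz'; rw [hz'] at hp; exact lt_irrefl _ hp
  · rw [hsym x y] at hz; rw [hz] at hp'; exact lt_irrefl _ hp'
  · exact lt_irrefl _ (hlt.trans hlt')

include hsym hu in
lemma rlt_total (hnn : ∀ x y, 0 ≤ d x y) {x y : X} (hxy : x ≠ y) : rlt d x y ∨ rlt d y x := by
  rcases eq_or_lt_of_le (hnn x y) with hz | hp
  · rcases lt_or_gt_of_ne hxy with h | h
    · exact Or.inl (Or.inr ⟨hz.symm, hxy, h⟩)
    · exact Or.inr (Or.inr ⟨by rw [hsym y x]; exact hz.symm, hxy.symm, h⟩)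
  · have hne := uleader_ne d hsym hu hxy hp
    rcases lt_or_gt_of_ne hne with h | h
    · exact Or.inl (Or.inl ⟨hp, h⟩)
    · refine Or.inr (Or.inl ⟨by rw [hsym y x]; exact hp, ?_⟩)
      rw [hsym y x]; exact h

include hsym hu in
/-- Key lemma: if `a ≺ b ≺ c` then `d a b ≤ d a c`. -/
lemma rlt_key1 (hnn : ∀ x y, 0 ≤ d x y) {a b c : X}
    (h1 : rlt d a b) (h2 : rlt d b c) : d a b ≤ d a c := by
  by_contra h
  push_neg at h
  set r := d a b with hr
  have hr0 : 0 < r := lt_of_le_of_lt (hnn a c) h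
  have hbc : d b c = r := by
    have hle : d b c ≤ r := by
      calc d b c ≤ max (d b a) (d a c) := hu b a c
        _ ≤ r := max_le (le_of_eq (hsym b a)) (le_of_lt h)
    have hge : r ≤ d b c := by
      have := hu a c b
      have h2' : max (d a c) (d c b) = d c b := max_eq_right (by
        by_contra hcon
        push_neg at hcon
        have : d a b ≤ d a c := le_trans this (by rw [max_eq_left (le_of_lt hcon)])
        exact absurd this (not_le.mpr h))
      rw [h2', hsym c b] at this
      exact this
    linarith
  have hla : uleader d a r < uleader d b r := by
    rcases h1 with ⟨_, hl⟩ | ⟨hz, _⟩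
    · exact hl
    · rw [hr, hz] at hr0; exact absurd hr0 (lt_irrefl 0)
  have hlb : uleader d b r < uleader d c r := by
    rcases h2 with ⟨_, hl⟩ | ⟨hz, _⟩
    · rw [hbc] at hl; exact hl
    · rw [hz] at hbc; rw [← hbc] at hr0; exact absurd hr0 (lt_irrefl 0)
  have hac : uleader d a r = uleader d c r := uleader_eq d hsym hu h
  rw [hac] at hla
  exact lt_irrefl _ (hla.trans hlb)

include hsym hu in
/-- Key lemma: if `a ≺ b ≺ c` then `d b c ≤ d a c`. -/
lemma rlt_key2 (hnn : ∀ x y, 0 ≤ d x y) {a b c : X}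
    (h1 : rlt d a b) (h2 : rlt d b c) : d b c ≤ d a c := by
  by_contra h
  push_neg at h
  set r := d b c with hr
  have hr0 : 0 < r := lt_of_le_of_lt (hnn a c) h
  have hab : d a b = r := by
    have hle : d a b ≤ r := by
      calc d a b ≤ max (d a c) (d c b) := hu a c b
        _ ≤ r := max_le (le_of_lt h) (le_of_eq (hsym c b))
    have hge : r ≤ d a b := by
      have := hu b a c
      have h2' : max (d b a) (d a c) = d b a := max_eq_left (by
        by_contra hcon
        push_neg at hcon
        have : d b c ≤ d a c := le_trans this (by rw [max_eq_right (le_of_lt hcon)])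
        exact absurd this (not_le.mpr h))
      rw [h2', hsym b a] at this
      linarith [this, (hsym a b)]
    linarith
  have hla : uleader d a r < uleader d b r := by
    rcases h1 with ⟨_, hl⟩ | ⟨hz, _⟩
    · rw [hab] at hl; exact hl
    · rw [hz] at hab; rw [← hab] at hr0; exact absurd hr0 (lt_irrefl 0)
  have hlb : uleader d b r < uleader d c r := by
    rcases h2 with ⟨_, hl⟩ | ⟨hz, _⟩
    · exact hl
    · rw [hr, hz] at hr0; exact absurd hr0 (lt_irrefl 0)
  have hac : uleader d a r = uleader d c r := uleader_eq d hsym hu h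
  rw [hac] at hla
  exact lt_irrefl _ (hla.trans hlb)

include hsym hu in
lemma rlt_trans (hnn : ∀ x y, 0 ≤ d x y) {x y z : X}
    (h1 : rlt d x y) (h2 : rlt d y z) : rlt d x z := by
  have hk1 : d x y ≤ d x z := rlt_key1 d hsym hu hnn h1 h2
  have hk2 : d y z ≤ d x z := rlt_key2 d hsym hu hnn h1 h2
  have hxz : x ≠ z := by
    rintro rfl
    exact rlt_asymm d hsym h1 h2
  rcases eq_or_lt_of_le (hnn x z) with hz0 | hp
  · -- d x z = 0, hence d x y = d y z = 0
    have hxy0 : d x y = 0 := le_antisymm (by linarith) (hnn x y)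
    have hyz0 : d y z = 0 := le_antisymm (by linarith) (hnn y z)
    have hxy' : x < y := by
      rcases h1 with ⟨hp', _⟩ | ⟨_, _, h⟩
      · rw [hxy0] at hp'; exact absurd hp' (lt_irrefl 0)
      · exact h
    have hyz' : y < z := by
      rcases h2 with ⟨hp', _⟩ | ⟨_, _, h⟩
      · rw [hyz0] at hp'; exact absurd hp' (lt_irrefl 0)
      · exact h
    exact Or.inr ⟨hz0.symm, hxz, hxy'.trans hyz'⟩
  · set s := d x z with hs
    left
    refine ⟨hp, ?_⟩
    rcases eq_or_lt_of_le hk1 with hxy_eq | hxy_lt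
    · -- d x y = s
      have hla : uleader d x s < uleader d y s := by
        rcases h1 with ⟨_, hl⟩ | ⟨hz', _⟩
        · rw [hxy_eq] at hl; exact hl
        · rw [hz'] at hxy_eq; rw [← hxy_eq] at hp; exact absurd hp (lt_irrefl 0)
      rcases eq_or_lt_of_le hk2 with hyz_eq | hyz_lt
      · have hlb : uleader d y s < uleader d z s := by
          rcases h2 with ⟨_, hl⟩ | ⟨hz', _⟩
          · rw [hyz_eq] at hl; exact hl
          · rw [hz'] at hyz_eq; rw [← hyz_eq] at hp; exact absurd hp (lt_irrefl 0)
        exact hla.trans hlb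
      · have := uleader_eq d hsym hu hyz_lt
        rw [← this]
        exact hla
    · -- d x y < s, hence d y z = s (otherwise ultrametric contradiction)
      have hyz_eq : d y z = s := by
        rcases eq_or_lt_of_le hk2 with h' | h'
        · exact h'
        · exfalso
          have : d x z ≤ max (d x y) (d y z) := hu x y z
          have : s < s := lt_of_le_of_lt this (max_lt hxy_lt h')
          exact lt_irrefl _ this
      have hlb : uleader d y s < uleader d z s := by
        rcases h2 with ⟨_, hl⟩ | ⟨hz', _⟩
        · rw [hyz_eq] at hl; exact hl
        · rw [hz'] at hyz_eq; rw [← hyz_eq] at hp; exact absurd hp (lt_irrefl 0)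
      have := uleader_eq d hsym hu hxy_lt
      rw [this]
      exact hlb

end UltraAux

/-- Every ultrametric on a nonempty finite set is Robinsonian. -/
theorem ultrametric_isRobinsonian [Fintype X] [Nonempty X]
    (d : X → X → ℝ) (hd : IsDissimilarity d)
    (hu : ∀ x y z : X, d x z ≤ max (d x y) (d y z)) :
    IsRobinsonian d := by
  classical
  obtain ⟨hsym, hnn, hdiag⟩ := hd
  letI : LinearOrder X :=
    LinearOrder.lift' (Fintype.equivFin X) (Fintype.equivFin X).injective
  refine ⟨fun x y => rlt d x y ∨ x = y, ?_, ?_⟩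
  · refine { refl := fun x => Or.inr rfl, trans := ?_, antisymm := ?_, total := ?_ }
    · intro a b c hab hbc
      rcases hab with hab | rfl
      · rcases hbc with hbc | rfl
        · exact Or.inl (rlt_trans d hsym hu hnn hab hbc)
        · exact Or.inl hab
      · exact hbc
    · intro a b hab hba
      rcases hab with hab | rfl
      · rcases hba with hba | rfl
        · exact absurd hba (fun h => rlt_asymm d hsym hab h)
        · rfl
      · rfl
    · intro a b
      rcases eq_or_ne a b with rfl | hne
      · exact Or.inl (Or.inr rfl)
      · rcases rlt_total d hsym hu hnn hne with h | h
        · exact Or.inl (Or.inl h)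
        · exact Or.inr (Or.inl h)
  · -- compatibility
    have key1 : ∀ a b c : X, (rlt d a b ∨ a = b) → (rlt d b c ∨ b = c) →
        d a b ≤ d a c := by
      intro a b c hab hbc
      rcases hab with hab | rfl
      · rcases hbc with hbc | rfl
        · exact rlt_key1 d hsym hu hnn hab hbc
        · exact le_refl _
      · rw [hdiag]; exact hnn a c
    intro x u v y hxu huv hvy
    have hxv : rlt d x v ∨ x = v := by
      rcases hxu with h1 | rfl
      · rcases huv with h2 | rfl
        · exact Or.inl (rlt_trans d hsym hu hnn h1 h2)
        · exact Or.inl h1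
      · exact huv
    have huy : rlt d u y ∨ u = y := by
      rcases huv with h1 | rfl
      · rcases hvy with h2 | rfl
        · exact Or.inl (rlt_trans d hsym hu hnn h1 h2)
        · exact Or.inl h1
      · exact hvy
    have h1 : d x u ≤ d x y := key1 x u y hxu huy
    have h2 : d x v ≤ d x y := key1 x v y hxv hvy
    have h3 : d u v ≤ max (d u x) (d x v) := hu u x v
    rw [hsym u x] at h3
    have : d u v ≤ d x y := le_trans h3 (max_le h1 h2)
    linarith
end

section
/- Let d be a dissimilarity on a nonempty finite set X, let ε ≥ 0, and let ≺ be a linear order on X that is ε-compatible with d. If x,y,z ∈ X satisfy d(x,y) > max{ d(x,z), d(z,y) } + 2ε, then z lies strictly between x and y in the order ≺, i.e., either x ≺ z and z ≺ y, or y ≺ z and z ≺ x. -/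
open Finset

variable {X : Type*}

/-- If `≺` is an `ε`-compatible linear order and `d x y > max (d x z) (d z y) + 2ε`,
then `z` lies strictly between `x` and `y` in the order `≺`. -/
theorem strictly_between_of_large [Fintype X] [Nonempty X]
    (d : X → X → ℝ) (hd : IsDissimilarity d) (ε : ℝ) (hε : 0 ≤ ε)
    (le : X → X → Prop) (hle : IsLinearOrder X le) (hcomp : EpsCompatible d le ε)
    (x y z : X) (h : d x y > max (d x z) (d z y) + 2 * ε) :
    (le x z ∧ x ≠ z ∧ le z y ∧ z ≠ y) ∨ (le y z ∧ y ≠ z ∧ le z x ∧ z ≠ x) := by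
  have hxz : x ≠ z := by
    rintro rfl
    have : d x y ≤ max (d x x) (d x y) := le_max_right _ _
    linarith [h, hε]
  have hzy : z ≠ y := by
    rintro rfl
    have : d x z ≤ max (d x z) (d z z) := le_max_left _ _
    linarith [h, hε]
  rcases hle.total x y with hxy | hyx
  · left
    have h1 : le x z := by
      rcases hle.total x z with h1 | h1
      · exact h1
      · exfalso
        have := hcomp z x y y h1 hxy (hle.refl y)
        have := le_max_right (d x z) (d z y)
        linarith
    have h2 : le z y := by
      rcases hle.total z y with h2 | h2
      · exact h2
      · exfalso
        have := hcomp x x y z (hle.refl x) hxy h2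
        have := le_max_left (d x z) (d z y)
        linarith
    exact ⟨h1, hxz, h2, hzy⟩
  · right
    have h1 : le y z := by
      rcases hle.total y z with h1 | h1
      · exact h1
      · exfalso
        have := hcomp z y x x h1 hyx (hle.refl x)
        have hsym := hd.1 y x
        have := le_max_left (d x z) (d z y)
        have hsym2 := hd.1 z x
        linarith
    have h2 : le z x := by
      rcases hle.total z x with h2 | h2
      · exact h2
      · exfalso
        have := hcomp y y x z (hle.refl y) hyx h2
        have hsym := hd.1 y x
        have hsym2 := hd.1 y z
        have := le_max_right (d x z) (d z y)
        linarith
    exact ⟨h1, fun e => hzy e.symm, h2, fun e => hxz e.symm⟩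
end

section
/- Let d be a dissimilarity on a nonempty finite set X, let ε ≥ 0, let p,q ∈ X be distinct, and let ≼ be the canonical relation determined by d, ε, p, q. If ≺ is a linear order on X that is ε-compatible with d and satisfies p ≺ q, then x ≼ y implies x ⪯ y for all x,y ∈ X (every ε-compatible linear order with p ≺ q refines ≼). Consequently, if ≼ is not antisymmetric, then no linear order on X is ε-compatible with d. -/
open Finset

variable {X : Type*}

/-- The canonical relation `≼` determined by `d`, `ε` and the base pair `(p, q)`:
the smallest reflexive and transitive relation containing `(p, q)` and closed under the
betweenness rules coming from triplets `x, z, y` with `d x y > max (d x z) (d z y) + 2ε`. -/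
inductive Canon (d : X → X → ℝ) (ε : ℝ) (p q : X) : X → X → Prop
  | base : Canon d ε p q p q
  | refl (x : X) : Canon d ε p q x x
  | trans {x y z : X} : Canon d ε p q x y → Canon d ε p q y z → Canon d ε p q x z
  | rule1 {x y z : X} (h : d x y > max (d x z) (d z y) + 2 * ε)
      (hxz : Canon d ε p q x z) : Canon d ε p q z y
  | rule2 {x y z : X} (h : d x y > max (d x z) (d z y) + 2 * ε)
      (hzy : Canon d ε p q z y) : Canon d ε p q x z
  | rule3a {x y z : X} (h : d x y > max (d x z) (d z y) + 2 * ε)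
      (hxy : Canon d ε p q x y) : Canon d ε p q x z
  | rule3b {x y z : X} (h : d x y > max (d x z) (d z y) + 2 * ε)
      (hxy : Canon d ε p q x y) : Canon d ε p q z y
  | rule4 {x y z : X} (h : d x y > max (d x z) (d z y) + 2 * ε)
      (hzx : Canon d ε p q z x) : Canon d ε p q y z
  | rule5 {x y z : X} (h : d x y > max (d x z) (d z y) + 2 * ε)
      (hyz : Canon d ε p q y z) : Canon d ε p q z x
  | rule6a {x y z : X} (h : d x y > max (d x z) (d z y) + 2 * ε)
      (hyx : Canon d ε p q y x) : Canon d ε p q y z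
  | rule6b {x y z : X} (h : d x y > max (d x z) (d z y) + 2 * ε)
      (hyx : Canon d ε p q y x) : Canon d ε p q z x

/-- `x ? y` : `x` and `y` are incomparable for the canonical relation. -/
def CanonIncomp (d : X → X → ℝ) (ε : ℝ) (p q x y : X) : Prop :=
  ¬ Canon d ε p q x y ∧ ¬ Canon d ε p q y x

lemma canon_flip {d : X → X → ℝ} {ε : ℝ} {p q x y : X}
    (hc : Canon d ε p q x y) : Canon d ε q p y x := by
  induction hc with
  | base => exact Canon.base
  | refl x => exact Canon.refl x
  | trans _ _ ih1 ih2 => exact Canon.trans ih2 ih1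
  | rule1 h _ ih => exact Canon.rule4 h ih
  | rule2 h _ ih => exact Canon.rule5 h ih
  | rule3a h _ ih => exact Canon.rule6b h ih
  | rule3b h _ ih => exact Canon.rule6a h ih
  | rule4 h _ ih => exact Canon.rule1 h ih
  | rule5 h _ ih => exact Canon.rule2 h ih
  | rule6a h _ ih => exact Canon.rule3b h ih
  | rule6b h _ ih => exact Canon.rule3a h ih

lemma canon_btwn {d : X → X → ℝ} (hd : IsDissimilarity d) {ε : ℝ} (hε : 0 ≤ ε)
    {le : X → X → Prop} (hlin : IsLinearOrder X le) (hcomp : EpsCompatible d le ε)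
    {x y z : X} (h : d x y > max (d x z) (d z y) + 2 * ε) :
    (le x z ∧ le z y) ∨ (le y z ∧ le z x) := by
  haveI := hlin
  obtain ⟨hsym, _, _⟩ := hd
  have hmax1 : d x z ≤ max (d x z) (d z y) := le_max_left _ _
  have hmax2 : d z y ≤ max (d x z) (d z y) := le_max_right _ _
  rcases total_of le x z with hxz | hzx
  · rcases total_of le z y with hzy | hyz
    · exact Or.inl ⟨hxz, hzy⟩
    · exfalso
      rcases total_of le x y with hxy | hyx
      · have := hcomp x x y z (refl_of le x) hxy hyz
        linarith
      · have := hcomp y y x z (refl_of le y) hyx hxz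
        rw [hsym y x, hsym y z] at this
        linarith
  · rcases total_of le z y with hzy | hyz
    · exfalso
      rcases total_of le x y with hxy | hyx
      · have := hcomp z x y y hzx hxy (refl_of le y)
        linarith
      · have := hcomp z y x x hzy hyx (refl_of le x)
        rw [hsym y x, hsym z x] at this
        linarith
    · exact Or.inr ⟨hyz, hzx⟩

lemma canon_ne_left {d : X → X → ℝ} {ε : ℝ} (hε : 0 ≤ ε) {x y z : X}
    (h : d x y > max (d x z) (d z y) + 2 * ε) : z ≠ x := by
  rintro rfl
  have := le_max_right (d z z) (d z y)
  linarith

lemma canon_ne_right {d : X → X → ℝ} {ε : ℝ} (hε : 0 ≤ ε) {x y z : X}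
    (h : d x y > max (d x z) (d z y) + 2 * ε) : z ≠ y := by
  rintro rfl
  have := le_max_left (d x z) (d z z)
  linarith

lemma canon_refines {d : X → X → ℝ} (hd : IsDissimilarity d) {ε : ℝ} (hε : 0 ≤ ε)
    {le : X → X → Prop} (hlin : IsLinearOrder X le) (hcomp : EpsCompatible d le ε)
    {p q : X} (hpq : le p q) : ∀ x y, Canon d ε p q x y → le x y := by
  haveI := hlin
  intro x y hc
  induction hc with
  | base => exact hpq
  | refl x => exact refl_of le x
  | trans _ _ ih1 ih2 => exact trans_of le ih1 ih2
  | rule1 h _ ih =>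
    rcases canon_btwn hd hε hlin hcomp h with ⟨_, h2⟩ | ⟨_, h2⟩
    · exact h2
    · exact absurd (antisymm_of le ih h2) (canon_ne_left hε h).symm
  | rule2 h _ ih =>
    rcases canon_btwn hd hε hlin hcomp h with ⟨h1, _⟩ | ⟨h1, _⟩
    · exact h1
    · exact absurd (antisymm_of le ih h1) (canon_ne_right hε h)
  | rule3a h _ ih =>
    rcases canon_btwn hd hε hlin hcomp h with ⟨h1, _⟩ | ⟨h1, h2⟩
    · exact h1
    · exact trans_of le ih h1
  | rule3b h _ ih =>
    rcases canon_btwn hd hε hlin hcomp h with ⟨_, h2⟩ | ⟨h1, h2⟩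
    · exact h2
    · exact trans_of le h2 ih
  | rule4 h _ ih =>
    rcases canon_btwn hd hε hlin hcomp h with ⟨h1, _⟩ | ⟨h1, _⟩
    · exact absurd (antisymm_of le h1 ih) (canon_ne_left hε h).symm
    · exact h1
  | rule5 h _ ih =>
    rcases canon_btwn hd hε hlin hcomp h with ⟨_, h2⟩ | ⟨_, h2⟩
    · exact absurd (antisymm_of le h2 ih) (canon_ne_right hε h)
    · exact h2
  | rule6a h _ ih =>
    rcases canon_btwn hd hε hlin hcomp h with ⟨h1, _⟩ | ⟨h1, _⟩
    · exact trans_of le ih h1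
    · exact h1
  | rule6b h _ ih =>
    rcases canon_btwn hd hε hlin hcomp h with ⟨_, h2⟩ | ⟨_, h2⟩
    · exact trans_of le h2 ih
    · exact h2

/-- Every `ε`-compatible linear order with `p ≺ q` refines the canonical relation `≼`;
consequently, if `≼` is not antisymmetric then no linear order on `X` is `ε`-compatible
with `d`. -/
theorem canon_refined [Fintype X] [Nonempty X]
    (d : X → X → ℝ) (hd : IsDissimilarity d) (ε : ℝ) (hε : 0 ≤ ε)
    (p q : X) (hpq : p ≠ q) :
    (∀ le : X → X → Prop, IsLinearOrder X le → EpsCompatible d le ε → le p q →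
      ∀ x y, Canon d ε p q x y → le x y) ∧
    (¬ (∀ x y, Canon d ε p q x y → Canon d ε p q y x → x = y) →
      ¬ ∃ le : X → X → Prop, IsLinearOrder X le ∧ EpsCompatible d le ε) := by
  constructor
  · intro le hlin hcomp hle x y hc
    exact canon_refines hd hε hlin hcomp hle x y hc
  · intro hna ⟨le, hlin, hcomp⟩
    haveI := hlin
    apply hna
    intro x y hxy hyx
    rcases total_of le p q with hpq' | hqp'
    · exact antisymm_of le (canon_refines hd hε hlin hcomp hpq' x y hxy)
        (canon_refines hd hε hlin hcomp hpq' y x hyx)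
    · exact antisymm_of le (canon_refines hd hε hlin hcomp hqp' x y (canon_flip hyx))
        (canon_refines hd hε hlin hcomp hqp' y x (canon_flip hxy))
end

section
/- In the standing setup (canonical partial order ≼, maximal chain P, holes, pair admissibility and the standing assumption), let x,y ∈ X° be distinct and suppose it is NOT the case that i(x)=i(y), j(x)=j(y), and either d(x,y) > max{d_x,d_y} + 3ε or d(x,y) < max{d_x,d_y} − 3ε. Then for every bounding hole H_k of x (k ∈ {i(x), j(x)−1}) and every bounding hole H_{k'} of y (k' ∈ {i(y), j(y)−1}), the pair (H_k, H_{k'}) is (x,y,12)-admissible. -/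
/-!
An order on `P ∪ {x, y}` is compatible once, in every triple of its points, the outer distance
dominates the two inner ones (`Between`). Triples missing `x` or `y` are controlled by the
admissibility of the hole of the other point, so only the triples `(a α, x, y)`, `(x, a β, y)`
and `(x, y, a γ)` need work.

For holes `k < k'` of `x` and `y`, the outer triples come from the standing assumption at `k`
and at `k'` together with the canonical rules: `y ≼ a (k + 1)` and `a k' ≼ x` fail, so the
betweenness rules bound distances to these chain points through `y` and `x`. The middle triples
need that inner chain points of `x` are not much farther from `x` than `y` is; this comes from
the standing assumption at a bounding hole chosen by comparing the intervals of `x` and `y`,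
and, when the intervals coincide, from `d x y ≥ max d_x d_y - 3ε`.

For a common hole `k`, the standing assumption gives an order with `y` in some hole `k₀`, and
`y` can be slid back to `k` when `d x ·` is flat on the chain points it passes, which holds
inside the interval of `x`. If neither point can slide, the intervals coincide, and
`d x y ≤ max d_x d_y + 3ε` lets the point with the larger `d_·` go first. All bounds are `6ε`.
-/

open Finset

variable {X : Type*}

/-- `x ∈ X° = X \ P`, where `P = {a 0, …, a (n-1)}`. -/
def OutsideChain (a : ℕ → X) (n : ℕ) (x : X) : Prop := ∀ i, i < n → a i ≠ x

/-- The standing setup: `d` is a dissimilarity, `ε ≥ 0`, the canonical relation `≼`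
determined by `d`, `ε` and the distinct base pair `(p₀, q₀)` is antisymmetric (a partial
order), `a 0 ≼ a 1 ≼ … ≼ a (n-1)` is a maximal (by inclusion) chain of `(X, ≼)`, and
`a 0 ≼ x ≼ a (n-1)` for every `x ∈ X`. -/
structure RobinsonSetup (d : X → X → ℝ) (ε : ℝ) (p₀ q₀ : X) (a : ℕ → X) (n : ℕ) : Prop where
  dissim : IsDissimilarity d
  eps_nonneg : 0 ≤ ε
  base_ne : p₀ ≠ q₀
  antisymm : ∀ x y, Canon d ε p₀ q₀ x y → Canon d ε p₀ q₀ y x → x = y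
  npos : 0 < n
  chain : ∀ i j, i < j → j < n → Canon d ε p₀ q₀ (a i) (a j) ∧ a i ≠ a j
  maximal : ∀ x, OutsideChain a n x →
      ∃ i, i < n ∧ ¬ Canon d ε p₀ q₀ (a i) x ∧ ¬ Canon d ε p₀ q₀ x (a i)
  lower : ∀ x, Canon d ε p₀ q₀ (a 0) x
  upper : ∀ x, Canon d ε p₀ q₀ x (a (n - 1))

/-- `i(x)`: the largest index `i < n` with `a i ≼ x`. -/
noncomputable def iIdx (d : X → X → ℝ) (ε : ℝ) (p₀ q₀ : X) (a : ℕ → X) (n : ℕ) (x : X) : ℕ :=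
  sSup {i | i < n ∧ Canon d ε p₀ q₀ (a i) x}

/-- `j(x)`: the smallest index `j < n` with `x ≼ a j`. -/
noncomputable def jIdx (d : X → X → ℝ) (ε : ℝ) (p₀ q₀ : X) (a : ℕ → X) (n : ℕ) (x : X) : ℕ :=
  sInf {j | j < n ∧ Canon d ε p₀ q₀ x (a j)}

/-- `ε`-compatibility of the linear order given by the first `m` entries of the
sequence `b` (with the relevant dissimilarity restricted to those entries). -/
def SeqCompatible (d : X → X → ℝ) (b : ℕ → X) (m : ℕ) (ε : ℝ) : Prop :=
  ∀ q r s t : ℕ, q ≤ r → r ≤ s → s ≤ t → t < m → d (b r) (b s) ≤ d (b q) (b t) + 2 * ε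

/-- The sequence on `P ∪ {x}` obtained by inserting `x` into the hole `H k`,
i.e. between `a k` and `a (k+1)`. -/
def insertSeq (a : ℕ → X) (x : X) (k : ℕ) : ℕ → X := fun m =>
  if m ≤ k then a m else if m = k + 1 then x else a (m - 1)

/-- The sequence on `P ∪ {x, y}` obtained by inserting `x` into the hole `H k` and `y`
into the hole `H k'`, where `k ≤ k'` (and `x` placed before `y` if `k = k'`). -/
def insertSeq2 (a : ℕ → X) (x y : X) (k k' : ℕ) : ℕ → X := fun m =>
  if m ≤ k then a m
  else if m = k + 1 then x
  else if m ≤ k' + 1 then a (m - 1)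
  else if m = k' + 2 then y
  else a (m - 2)

/-- The hole `H k` is `x`-admissible: the linear order on `P ∪ {x}` obtained by inserting
`x` between `a k` and `a (k+1)` is `ε`-compatible with (the restriction of) `d`. -/
def HoleAdmissible (d : X → X → ℝ) (ε : ℝ) (a : ℕ → X) (n : ℕ) (x : X) (k : ℕ) : Prop :=
  SeqCompatible d (insertSeq a x k) (n + 1) ε

/-- The pair of holes `(H k, H k')` is `(x, y, c)`-admissible. -/
def PairHoleAdmissible (d : X → X → ℝ) (ε : ℝ) (a : ℕ → X) (n : ℕ)
    (x y : X) (k k' : ℕ) (c : ℝ) : Prop :=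
  HoleAdmissible d ε a n x k ∧ HoleAdmissible d ε a n y k' ∧
    ((k ≤ k' ∧ SeqCompatible d (insertSeq2 a x y k k') (n + 2) (c * ε)) ∨
     (k' ≤ k ∧ SeqCompatible d (insertSeq2 a y x k' k) (n + 2) (c * ε)))

/-- `d_x`: the mean of `min {d x (a k) : i < k < j}` and `max {d x (a k) : i < k < j}`. -/
noncomputable def dxVal (d : X → X → ℝ) (a : ℕ → X) (x : X) (i j : ℕ) : ℝ :=
  (sInf {r | ∃ k, i < k ∧ k < j ∧ r = d x (a k)} +
    sSup {r | ∃ k, i < k ∧ k < j ∧ r = d x (a k)}) / 2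

/-- Standing assumption: for all distinct `z, w ∈ X°` and each bounding hole `H k` of `z`
there is a `w`-admissible hole `H k'` such that `(H k, H k')` is `(z, w, 1)`-admissible. -/
def StandingAssumption (d : X → X → ℝ) (ε : ℝ) (p₀ q₀ : X) (a : ℕ → X) (n : ℕ) : Prop :=
  ∀ z w, z ≠ w → OutsideChain a n z → OutsideChain a n w →
    ∀ k, (k = iIdx d ε p₀ q₀ a n z ∨ k = jIdx d ε p₀ q₀ a n z - 1) →
      ∃ k', iIdx d ε p₀ q₀ a n w ≤ k' ∧ k' ≤ jIdx d ε p₀ q₀ a n w - 1 ∧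
        PairHoleAdmissible d ε a n z w k k' 1

/-- `x ∈ X_ij`. -/
def InXij (d : X → X → ℝ) (ε : ℝ) (p₀ q₀ : X) (a : ℕ → X) (n i j : ℕ) (x : X) : Prop :=
  OutsideChain a n x ∧ iIdx d ε p₀ q₀ a n x = i ∧ jIdx d ε p₀ q₀ a n x = j

/-- `{x, y} ∈ L_ij` : `d x y < max (d_x) (d_y) - 3ε`. -/
def LPair (d : X → X → ℝ) (ε : ℝ) (a : ℕ → X) (i j : ℕ) (x y : X) : Prop :=
  d x y < max (dxVal d a x i j) (dxVal d a y i j) - 3 * ε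

/-- `x` and `y` lie in a common block: same connected component of the graph `(X_ij, L_ij)`. -/
def SameBlock (d : X → X → ℝ) (ε : ℝ) (p₀ q₀ : X) (a : ℕ → X) (n i j : ℕ) (x y : X) : Prop :=
  Relation.ReflTransGen
    (fun u v => InXij d ε p₀ q₀ a n i j u ∧ InXij d ε p₀ q₀ a n i j v ∧ LPair d ε a i j u v)
    x y

/-- `x ↣ y` : rule (A1) or (A2). -/
def ArrowRel (d : X → X → ℝ) (ε : ℝ) (p₀ q₀ : X) (a : ℕ → X) (n i j : ℕ) (x y : X) : Prop :=
  dxVal d a x i j < dxVal d a y i j - 4 * ε ∨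
    (dxVal d a y i j - 4 * ε ≤ dxVal d a x i j ∧
      ∃ z, InXij d ε p₀ q₀ a n i j z ∧ ¬ LPair d ε a i j x z ∧ ¬ LPair d ε a i j y z ∧
        d x z < d y z - 16 * ε)

/-- The arc `x → y` of the directed graph `L→_ij` : rule (L1) or (L2). -/
def LArc (d : X → X → ℝ) (ε : ℝ) (p₀ q₀ : X) (a : ℕ → X) (n i j : ℕ) (x y : X) : Prop :=
  InXij d ε p₀ q₀ a n i j x ∧ InXij d ε p₀ q₀ a n i j y ∧
    ((ArrowRel d ε p₀ q₀ a n i j x y ∧ SameBlock d ε p₀ q₀ a n i j x y) ∨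
      d x y < max (dxVal d a x i j) (dxVal d a y i j) - 5 * ε)

/-- `x` and `y` lie in a common cell: same strongly connected component of `L→_ij`. -/
def SameCell (d : X → X → ℝ) (ε : ℝ) (p₀ q₀ : X) (a : ℕ → X) (n i j : ℕ) (x y : X) : Prop :=
  Relation.ReflTransGen (LArc d ε p₀ q₀ a n i j) x y ∧
    Relation.ReflTransGen (LArc d ε p₀ q₀ a n i j) y x

section Sequences

variable {d : X → X → ℝ} {δ δ' ε ε' : ℝ} {a : ℕ → X} {n : ℕ}

def Between (d : X → X → ℝ) (δ : ℝ) (u w v : X) : Prop :=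
  d u w ≤ d u v + δ ∧ d w v ≤ d u v + δ

theorem Between.mono {u w v : X} (h : Between d δ u w v) (hδ : δ ≤ δ') : Between d δ' u w v :=
  ⟨by linarith [h.1], by linarith [h.2]⟩

theorem between_left_self (hd : IsDissimilarity d) (hδ : 0 ≤ δ) (u v : X) : Between d δ u u v :=
  ⟨by linarith [hd.2.2 u, hd.2.1 u v], by linarith⟩

theorem between_right_self (hd : IsDissimilarity d) (hδ : 0 ≤ δ) (u v : X) : Between d δ u v v :=
  ⟨by linarith, by linarith [hd.2.2 v, hd.2.1 u v]⟩

theorem SeqCompatible.between {b : ℕ → X} {m q r s : ℕ} (h : SeqCompatible d b m ε)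
    (hqr : q ≤ r) (hrs : r ≤ s) (hs : s < m) : Between d (2 * ε) (b q) (b r) (b s) :=
  ⟨h q q r s le_rfl hqr hrs hs, h q r s s hqr hrs le_rfl hs⟩

theorem seqCompatible_of_between {b : ℕ → X} {m : ℕ}
    (h : ∀ q r s, q ≤ r → r ≤ s → s < m → Between d δ (b q) (b r) (b s)) :
    SeqCompatible d b m δ := fun q r s t hqr hrs hst ht => by
  linarith [(h q r s hqr hrs (by omega)).2, (h q s t (hqr.trans hrs) hst ht).1]

theorem SeqCompatible.mono {b : ℕ → X} {m : ℕ} (h : SeqCompatible d b m ε) (hε : ε ≤ ε') :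
    SeqCompatible d b m ε' := fun q r s t h₁ h₂ h₃ h₄ => by
  linarith [h q r s t h₁ h₂ h₃ h₄]

variable {u v : X} {h h' m : ℕ}

theorem insertSeq_of_le (hm : m ≤ h) : insertSeq a u h m = a m := by
  simp [insertSeq, hm]

theorem insertSeq_succ_self : insertSeq a u h (h + 1) = u := by
  simp [insertSeq]

theorem insertSeq_succ_of_lt (hm : h < m) : insertSeq a u h (m + 1) = a m := by
  simp [insertSeq, show ¬ m + 1 ≤ h by omega, show m ≠ h by omega]

theorem insertSeq2_of_le (hm : m ≤ h) : insertSeq2 a u v h h' m = a m := by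
  simp [insertSeq2, hm]

theorem insertSeq2_succ_self : insertSeq2 a u v h h' (h + 1) = u := by
  simp [insertSeq2]

theorem insertSeq2_succ_of_lt (hm : h < m) (hm' : m ≤ h') :
    insertSeq2 a u v h h' (m + 1) = a m := by
  simp [insertSeq2, show ¬ m + 1 ≤ h by omega, show m ≠ h by omega, hm']

theorem insertSeq2_add_two_self (hh : h ≤ h') : insertSeq2 a u v h h' (h' + 2) = v := by
  simp [insertSeq2, show ¬ h' + 2 ≤ h by omega, show h' + 1 ≠ h by omega]

theorem insertSeq2_add_two_of_lt (hh : h ≤ h') (hm : h' < m) :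
    insertSeq2 a u v h h' (m + 2) = a m := by
  simp [insertSeq2, show ¬ m + 2 ≤ h by omega, show m + 1 ≠ h by omega,
    show ¬ m + 1 ≤ h' by omega, show m ≠ h' by omega]

/-- Deleting `v` from `insertSeq2 a u v h h'` leaves `insertSeq a u h`. -/
theorem insertSeq2_eq_insertSeq_fst (hh : h ≤ h') {p : ℕ} (hp : p ≠ h' + 2) :
    insertSeq2 a u v h h' p = insertSeq a u h (if p < h' + 2 then p else p - 1) := by
  unfold insertSeq2 insertSeq
  split_ifs <;> first | rfl | omega

/-- Deleting `u` from `insertSeq2 a u v h h'` leaves `insertSeq a v h'`. -/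
theorem insertSeq2_eq_insertSeq_snd (hh : h ≤ h') {p : ℕ} (hp : p ≠ h + 1) :
    insertSeq2 a u v h h' p = insertSeq a v h' (if p < h + 1 then p else p - 1) := by
  unfold insertSeq2 insertSeq
  split_ifs <;> first | rfl | omega

end Sequences

section Placements

variable {d : X → X → ℝ} {δ ε : ℝ} {a : ℕ → X} {n : ℕ} {u v : X} {h h' α β γ : ℕ}

theorem HoleAdmissible.between_chain_left (H : HoleAdmissible d ε a n u h) (hαβ : α ≤ β)
    (hβ : β ≤ h) (hh : h < n) : Between d (2 * ε) (a α) (a β) u := by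
  have := SeqCompatible.between H hαβ (hβ.trans h.le_succ) (by omega : h + 1 < n + 1)
  rwa [insertSeq_of_le (hαβ.trans hβ), insertSeq_of_le hβ, insertSeq_succ_self] at this

theorem HoleAdmissible.between_chain_right (H : HoleAdmissible d ε a n u h) (hβ : h < β)
    (hβγ : β ≤ γ) (hγ : γ < n) : Between d (2 * ε) u (a β) (a γ) := by
  have := SeqCompatible.between H (by omega : h + 1 ≤ β + 1) (Nat.succ_le_succ hβγ)
    (by omega : γ + 1 < n + 1)
  rwa [insertSeq_succ_self, insertSeq_succ_of_lt hβ, insertSeq_succ_of_lt (hβ.trans_le hβγ)]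
    at this

theorem HoleAdmissible.between_across (H : HoleAdmissible d ε a n u h) (hα : α ≤ h)
    (hγ : h < γ) (hγn : γ < n) : Between d (2 * ε) (a α) u (a γ) := by
  have := SeqCompatible.between H (by omega : α ≤ h + 1) (by omega : h + 1 ≤ γ + 1)
    (by omega : γ + 1 < n + 1)
  rwa [insertSeq_of_le hα, insertSeq_succ_self, insertSeq_succ_of_lt hγ] at this

/-- `u` in the hole `H h` before `v` in the hole `H h'`; `PairHoleAdmissible` asks for this
with `(x, y)` or with `(y, x)`. -/
def PlacedPair (d : X → X → ℝ) (ε : ℝ) (a : ℕ → X) (n : ℕ) (u v : X) (h h' : ℕ) : Prop :=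
  h ≤ h' ∧ SeqCompatible d (insertSeq2 a u v h h') (n + 2) ε

theorem PlacedPair.mono (P : PlacedPair d ε a n u v h h') (hε : ε ≤ δ) :
    PlacedPair d δ a n u v h h' :=
  ⟨P.1, P.2.mono hε⟩

theorem PlacedPair.between_left (P : PlacedPair d ε a n u v h h') (hα : α ≤ h) (hh' : h' < n) :
    Between d (2 * ε) (a α) u v := by
  have hh := P.1
  have := P.2.between (by omega : α ≤ h + 1) (by omega : h + 1 ≤ h' + 2) (by omega)
  rwa [insertSeq2_of_le hα, insertSeq2_succ_self, insertSeq2_add_two_self hh] at this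

theorem PlacedPair.between_mid (P : PlacedPair d ε a n u v h h') (hβ : h < β) (hβ' : β ≤ h')
    (hh' : h' < n) : Between d (2 * ε) u (a β) v := by
  have := P.2.between (by omega : h + 1 ≤ β + 1) (by omega : β + 1 ≤ h' + 2) (by omega)
  rwa [insertSeq2_succ_self, insertSeq2_succ_of_lt hβ hβ', insertSeq2_add_two_self P.1] at this

theorem PlacedPair.between_right (P : PlacedPair d ε a n u v h h') (hγ : h' < γ) (hγn : γ < n) :
    Between d (2 * ε) u v (a γ) := by
  have hh := P.1
  have := P.2.between (by omega : h + 1 ≤ h' + 2) (by omega : h' + 2 ≤ γ + 2) (by omega)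
  rwa [insertSeq2_succ_self, insertSeq2_add_two_self hh, insertSeq2_add_two_of_lt hh hγ] at this

/-- Triples of positions avoiding `v` (resp. `u`) are covered by the admissibility of `u`
(resp. `v`); the three hypotheses are the triples containing both. -/
theorem placedPair_of_between (hd : IsDissimilarity d) (hε : 0 ≤ ε) (hδ : 2 * ε ≤ δ)
    (hh : h ≤ h') (hh' : h' < n)
    (Hu : HoleAdmissible d ε a n u h) (Hv : HoleAdmissible d ε a n v h')
    (hleft : ∀ α, α ≤ h → Between d δ (a α) u v)
    (hmid : ∀ β, h < β → β ≤ h' → Between d δ u (a β) v)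
    (hright : ∀ γ, h' < γ → γ < n → Between d δ u v (a γ)) :
    PlacedPair d δ a n u v h h' := by
  refine ⟨hh, seqCompatible_of_between fun q r s hqr hrs hs => ?_⟩
  by_cases hv : q ≠ h' + 2 ∧ r ≠ h' + 2 ∧ s ≠ h' + 2
  · obtain ⟨hq, hr, hs'⟩ := hv
    rw [insertSeq2_eq_insertSeq_fst hh hq, insertSeq2_eq_insertSeq_fst hh hr,
      insertSeq2_eq_insertSeq_fst hh hs']
    exact (SeqCompatible.between Hu (by split_ifs <;> omega) (by split_ifs <;> omega)
      (by split_ifs <;> omega)).mono hδ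
  by_cases hu : q ≠ h + 1 ∧ r ≠ h + 1 ∧ s ≠ h + 1
  · obtain ⟨hq, hr, hs'⟩ := hu
    rw [insertSeq2_eq_insertSeq_snd hh hq, insertSeq2_eq_insertSeq_snd hh hr,
      insertSeq2_eq_insertSeq_snd hh hs']
    exact (SeqCompatible.between Hv (by split_ifs <;> omega) (by split_ifs <;> omega)
      (by split_ifs <;> omega)).mono hδ
  have hδ0 : 0 ≤ δ := by linarith
  rcases hqr.eq_or_lt with rfl | hqr
  · exact between_left_self hd hδ0 _ _
  rcases hrs.eq_or_lt with rfl | hrs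
  · exact between_right_self hd hδ0 _ _
  have hcases : (q < h + 1 ∧ r = h + 1 ∧ s = h' + 2) ∨
      (q = h + 1 ∧ h + 1 < r ∧ r < h' + 2 ∧ s = h' + 2) ∨
      (q = h + 1 ∧ r = h' + 2 ∧ h' + 2 < s) := by omega
  rcases hcases with ⟨hq, rfl, rfl⟩ | ⟨rfl, hr, hr', rfl⟩ | ⟨rfl, rfl, hs'⟩
  · rw [insertSeq2_of_le (by omega : q ≤ h), insertSeq2_succ_self, insertSeq2_add_two_self hh]
    exact hleft q (by omega)
  · obtain ⟨β, rfl⟩ : ∃ β, r = β + 1 := ⟨r - 1, by omega⟩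
    rw [insertSeq2_succ_self, insertSeq2_succ_of_lt (by omega) (by omega),
      insertSeq2_add_two_self hh]
    exact hmid β (by omega) (by omega)
  · obtain ⟨γ, rfl⟩ : ∃ γ, s = γ + 2 := ⟨s - 2, by omega⟩
    rw [insertSeq2_succ_self, insertSeq2_add_two_self hh, insertSeq2_add_two_of_lt hh (by omega)]
    exact hright γ (by omega) (by omega)

end Placements

section Slides

variable {d : X → X → ℝ} {ε : ℝ} {a : ℕ → X} {n : ℕ} {u v : X} {h : ℕ}

theorem PlacedPair.slide_snd {h₂ : ℕ} (hd : IsDissimilarity d) (hε : 0 ≤ ε)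
    (P : PlacedPair d ε a n u v h h₂) (hh₂ : h₂ < n)
    (Hu : HoleAdmissible d ε a n u h) (Hv : HoleAdmissible d ε a n v h)
    (hclose : ∀ γ, h < γ → γ ≤ h₂ → d u v ≤ d u (a γ) + 4 * ε) :
    PlacedPair d (6 * ε) a n u v h h := by
  have hh := P.1
  refine placedPair_of_between hd hε (by linarith) le_rfl (by omega) Hu Hv
    (fun α hα => (P.between_left hα hh₂).mono (by linarith)) (fun β h₁ h₂ => by omega)
    fun γ hγ hγn => ?_
  rcases lt_or_ge h₂ γ with hγ₂ | hγ₂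
  · exact (P.between_right hγ₂ hγn).mono (by linarith)
  · have := (P.between_mid hγ hγ₂ hh₂).2
    exact ⟨by linarith [hclose γ hγ hγ₂], by linarith [hd.1 v (a γ), hclose γ hγ hγ₂]⟩

theorem PlacedPair.slide_fst {h₁ : ℕ} (hd : IsDissimilarity d) (hε : 0 ≤ ε)
    (P : PlacedPair d ε a n u v h₁ h) (hh : h < n)
    (Hu : HoleAdmissible d ε a n u h) (Hv : HoleAdmissible d ε a n v h)
    (hclose : ∀ α, h₁ < α → α ≤ h → d u v ≤ d (a α) v + 4 * ε) :
    PlacedPair d (6 * ε) a n u v h h := by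
  refine placedPair_of_between hd hε (by linarith) le_rfl hh Hu Hv (fun α hα => ?_)
    (fun β h₁ h₂ => by omega) fun γ hγ hγn => (P.between_right hγ hγn).mono (by linarith)
  rcases le_or_gt α h₁ with hα₁ | hα₁
  · exact (P.between_left hα₁ hh).mono (by linarith)
  · have := (P.between_mid hα₁ hα hh).1
    exact ⟨by linarith [hd.1 u (a α), hclose α hα₁ hα], by linarith [hclose α hα₁ hα]⟩

end Slides

section Canonical

variable {d : X → X → ℝ} {ε : ℝ} {p₀ q₀ : X} {a : ℕ → X} {n : ℕ} {x : X}

local notation "𝒊" => iIdx d ε p₀ q₀ a n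
local notation "𝒋" => jIdx d ε p₀ q₀ a n
local infix:50 " ≼ " => Canon d ε p₀ q₀

theorem Canon.dist_le_max_of_not_left {u v z : X} (huv : u ≼ v) (h : ¬ u ≼ z) :
    d u v ≤ max (d u z) (d z v) + 2 * ε :=
  not_lt.1 fun hlt => h (Canon.rule3a hlt huv)

theorem Canon.dist_le_max_of_not_right {u v z : X} (huv : u ≼ v) (h : ¬ z ≼ v) :
    d u v ≤ max (d u z) (d z v) + 2 * ε :=
  not_lt.1 fun hlt => h (Canon.rule3b hlt huv)

theorem not_canon_of_iIdx_lt {m : ℕ} (h : 𝒊 x < m) (hm : m < n) : ¬ a m ≼ x := fun hc =>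
  absurd (le_csSup (s := {i | i < n ∧ a i ≼ x}) ⟨n, fun _ hi => hi.1.le⟩ ⟨hm, hc⟩) h.not_ge

namespace RobinsonSetup

theorem iIdx_mem (hs : RobinsonSetup d ε p₀ q₀ a n) (x : X) : 𝒊 x < n ∧ a (𝒊 x) ≼ x :=
  Nat.sSup_mem (s := {i | i < n ∧ a i ≼ x}) ⟨0, hs.npos, hs.lower x⟩ ⟨n, fun _ hm => hm.1.le⟩

theorem jIdx_mem (hs : RobinsonSetup d ε p₀ q₀ a n) (x : X) : 𝒋 x < n ∧ x ≼ a (𝒋 x) :=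
  Nat.sInf_mem (s := {j | j < n ∧ x ≼ a j}) ⟨n - 1, by have := hs.npos; omega, hs.upper x⟩

theorem not_canon_of_lt_jIdx (hs : RobinsonSetup d ε p₀ q₀ a n) {m : ℕ} (h : m < 𝒋 x) :
    ¬ x ≼ a m := fun hc =>
  absurd (Nat.sInf_le (s := {j | j < n ∧ x ≼ a j}) ⟨h.trans (hs.jIdx_mem x).1, hc⟩) h.not_ge

theorem iIdx_add_two_le_jIdx (hs : RobinsonSetup d ε p₀ q₀ a n) (hx : OutsideChain a n x) :
    𝒊 x + 2 ≤ 𝒋 x := by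
  obtain ⟨hi, hix⟩ := hs.iIdx_mem x
  obtain ⟨hj, hxj⟩ := hs.jIdx_mem x
  have hchain : ∀ {m m'}, m ≤ m' → m' < n → a m ≼ a m' := fun hmm' hm' =>
    hmm'.eq_or_lt.elim (fun h => h ▸ Canon.refl _) fun h => (hs.chain _ _ h hm').1
  by_contra hgap
  obtain ⟨m, hm, hmx, hxm⟩ := hs.maximal x hx
  rcases le_or_gt m (𝒊 x) with hmi | hmi
  · exact hmx ((hchain hmi hi).trans hix)
  · exact hxm (hxj.trans (hchain (by omega) hm))

end RobinsonSetup
end Canonical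

theorem abs_sub_dxVal_le {d : X → X → ℝ} {a : ℕ → X} {x : X} {ε : ℝ} {i j m : ℕ}
    (hflat : ∀ m l, i < m → m < j → i < l → l < j → d x (a m) ≤ d x (a l) + 2 * ε)
    (hm : i < m) (hm' : m < j) : |d x (a m) - dxVal d a x i j| ≤ ε := by
  set S := {r | ∃ k, i < k ∧ k < j ∧ r = d x (a k)}
  have hfin : S.Finite := ((Set.finite_Iio j).image fun k => d x (a k)).subset
    (by rintro _ ⟨k, -, hk, rfl⟩; exact ⟨k, hk, rfl⟩)
  have hmem : d x (a m) ∈ S := ⟨m, hm, hm', rfl⟩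
  have hinf : sInf S ≤ d x (a m) := csInf_le hfin.bddBelow hmem
  have hsup : d x (a m) ≤ sSup S := le_csSup hfin.bddAbove hmem
  have hinf' : d x (a m) - 2 * ε ≤ sInf S := le_csInf ⟨_, hmem⟩ <| by
    rintro _ ⟨l, hl, hl', rfl⟩; linarith [hflat m l hm hm' hl hl']
  have hsup' : sSup S ≤ d x (a m) + 2 * ε := csSup_le ⟨_, hmem⟩ <| by
    rintro _ ⟨l, hl, hl', rfl⟩; linarith [hflat l m hl hl' hm hm']
  rw [abs_le]
  unfold dxVal
  constructor <;> linarith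

structure PairContext (d : X → X → ℝ) (ε : ℝ) (p₀ q₀ : X) (a : ℕ → X) (n : ℕ) (x y : X) :
    Prop where
  setup : RobinsonSetup d ε p₀ q₀ a n
  standing : StandingAssumption d ε p₀ q₀ a n
  ne : x ≠ y
  outside_left : OutsideChain a n x
  outside_right : OutsideChain a n y
  near : ¬ (iIdx d ε p₀ q₀ a n x = iIdx d ε p₀ q₀ a n y ∧
    jIdx d ε p₀ q₀ a n x = jIdx d ε p₀ q₀ a n y ∧
    (d x y > max (dxVal d a x (iIdx d ε p₀ q₀ a n x) (jIdx d ε p₀ q₀ a n x))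
        (dxVal d a y (iIdx d ε p₀ q₀ a n y) (jIdx d ε p₀ q₀ a n y)) + 3 * ε ∨
      d x y < max (dxVal d a x (iIdx d ε p₀ q₀ a n x) (jIdx d ε p₀ q₀ a n x))
        (dxVal d a y (iIdx d ε p₀ q₀ a n y) (jIdx d ε p₀ q₀ a n y)) - 3 * ε))

section Pair

variable {d : X → X → ℝ} {ε : ℝ} {p₀ q₀ : X} {a : ℕ → X} {n : ℕ} {x y : X}

local notation "𝒊" => iIdx d ε p₀ q₀ a n
local notation "𝒋" => jIdx d ε p₀ q₀ a n

namespace PairContext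

theorem symm (S : PairContext d ε p₀ q₀ a n x y) : PairContext d ε p₀ q₀ a n y x where
  setup := S.setup
  standing := S.standing
  ne := S.ne.symm
  outside_left := S.outside_right
  outside_right := S.outside_left
  near := fun ⟨hi, hj, h⟩ => S.near ⟨hi.symm, hj.symm, by rwa [S.setup.dissim.1 y x, max_comm] at h⟩

theorem abs_sub_max_le (S : PairContext d ε p₀ q₀ a n x y) (hi : 𝒊 x = 𝒊 y) (hj : 𝒋 x = 𝒋 y) :
    |d x y - max (dxVal d a x (𝒊 x) (𝒋 x)) (dxVal d a y (𝒊 y) (𝒋 y))| ≤ 3 * ε := by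
  have h := S.near
  rw [hi, hj] at h ⊢
  simp only [true_and, not_or, gt_iff_lt, not_lt] at h
  rw [abs_le]
  constructor <;> linarith [h.1, h.2]

theorem index_bounds (S : PairContext d ε p₀ q₀ a n x y) : 𝒊 x + 2 ≤ 𝒋 x ∧ 𝒋 x < n :=
  ⟨S.setup.iIdx_add_two_le_jIdx S.outside_left, (S.setup.jIdx_mem x).1⟩

theorem exists_placed (S : PairContext d ε p₀ q₀ a n x y) {k : ℕ} (hk : k = 𝒊 x ∨ k = 𝒋 x - 1) :
    HoleAdmissible d ε a n x k ∧ ∃ k', 𝒊 y ≤ k' ∧ k' ≤ 𝒋 y - 1 ∧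
      (PlacedPair d ε a n x y k k' ∨ PlacedPair d ε a n y x k' k) := by
  obtain ⟨k', h₁, h₂, Hx, -, hP⟩ := S.standing x y S.ne S.outside_left S.outside_right k hk
  rw [one_mul] at hP
  exact ⟨Hx, k', h₁, h₂, hP⟩

theorem dist_le_of_inner (S : PairContext d ε p₀ q₀ a n x y) {m l : ℕ} (hm : 𝒊 x < m)
    (hm' : m < 𝒋 x) (hl : l < 𝒋 x) : d x (a m) ≤ d x (a l) + 2 * ε := by
  have := S.index_bounds
  rcases le_total m l with hml | hlm
  · exact ((S.exists_placed (.inl rfl)).1.between_chain_right hm hml (by omega)).1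
  · have := ((S.exists_placed (.inr rfl)).1.between_chain_left hlm (by omega) (by omega)).2
    rwa [S.setup.dissim.1 x, S.setup.dissim.1 x]

theorem abs_dist_sub_dxVal_le (S : PairContext d ε p₀ q₀ a n x y) {m : ℕ} (hm : 𝒊 x < m)
    (hm' : m < 𝒋 x) : |d x (a m) - dxVal d a x (𝒊 x) (𝒋 x)| ≤ ε :=
  abs_sub_dxVal_le (fun _ _ hm hm' _ hl => S.dist_le_of_inner hm hm' hl) hm hm'

/-- If the intervals of `x` and `y` differ, the standing assumption at a suitable bounding hole
puts a chain point close to `x` between `x` and `y`; if they coincide, `d x y` is close to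
`max d_x d_y ≥ d_x`. -/
theorem exists_inner_dist_le (S : PairContext d ε p₀ q₀ a n x y) :
    ∃ m, 𝒊 x < m ∧ m < 𝒋 x ∧ d x (a m) ≤ d x y + 4 * ε := by
  have hd := S.setup.dissim
  have hε := S.setup.eps_nonneg
  have gx := S.index_bounds
  have gy := S.symm.index_bounds
  rcases lt_trichotomy (𝒊 x) (𝒊 y) with hi | hi | hi
  · obtain ⟨-, k, hk, hk', P | P⟩ := S.exists_placed (.inl rfl)
    · exact ⟨𝒊 x + 1, by omega, by omega,
        by linarith [(P.between_mid (by omega) (by omega : 𝒊 x + 1 ≤ k) (by omega)).1]⟩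
    · exact absurd P.1 (by omega)
  · rcases lt_trichotomy (𝒋 x) (𝒋 y) with hj | hj | hj
    · obtain ⟨-, k, hk, hk', P | P⟩ := S.symm.exists_placed (.inr rfl)
      · exact absurd P.1 (by omega)
      · have h₁ := (P.between_mid (by omega : k < 𝒋 x) (by omega) (by omega)).1
        have h₂ := ((S.exists_placed (.inl rfl)).1.between_chain_right
          (by omega : 𝒊 x < 𝒋 x - 1) (Nat.sub_le _ 1) gx.2).1
        exact ⟨𝒋 x - 1, by omega, by omega, by linarith⟩
    · have h₁ := (abs_le.1 (S.abs_dist_sub_dxVal_le (m := 𝒊 x + 1) (by omega) (by omega))).2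
      have h₂ := (abs_le.1 (S.abs_sub_max_le hi hj)).1
      exact ⟨𝒊 x + 1, by omega, by omega,
        by linarith [le_max_left (dxVal d a x (𝒊 x) (𝒋 x)) (dxVal d a y (𝒊 y) (𝒋 y))]⟩
    · obtain ⟨-, k, hk, hk', P | P⟩ := S.exists_placed (.inr rfl)
      · exact absurd P.1 (by omega)
      · have := (P.between_mid (by omega : k < 𝒋 y) (by omega) (by omega)).2
        exact ⟨𝒋 y, by omega, hj, by linarith [hd.1 x (a (𝒋 y)), hd.1 x y]⟩
  · obtain ⟨-, k, hk, hk', P | P⟩ := S.symm.exists_placed (.inl rfl)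
    · have h₁ := (P.between_mid (by omega : 𝒊 y < 𝒊 x) (by omega : 𝒊 x ≤ k) (by omega)).2
      have h₂ := ((S.exists_placed (.inr rfl)).1.between_chain_left
        (by omega : 𝒊 x ≤ 𝒊 x + 1) (by omega) (by omega)).2
      exact ⟨𝒊 x + 1, by omega, by omega, by linarith [hd.1 x (a (𝒊 x + 1)), hd.1 x y]⟩
    · exact absurd P.1 (by omega)

theorem dist_inner_le (S : PairContext d ε p₀ q₀ a n x y) {β : ℕ} (hβ : 𝒊 x < β)
    (hβ' : β < 𝒋 x) : d x (a β) ≤ d x y + 6 * ε := by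
  obtain ⟨m, hm, hm', h⟩ := S.exists_inner_dist_le
  linarith [S.dist_le_of_inner hβ hβ' hm']

theorem inner_dist_ge_or (S : PairContext d ε p₀ q₀ a n x y) (hi : 𝒊 x = 𝒊 y) (hj : 𝒋 x = 𝒋 y) :
    (∀ γ, 𝒊 x < γ → γ < 𝒋 x → d x y ≤ d x (a γ) + 4 * ε) ∨
      (∀ γ, 𝒊 x < γ → γ < 𝒋 x → d x y ≤ d y (a γ) + 4 * ε) := by
  have h := abs_le.1 (S.abs_sub_max_le hi hj)
  rcases le_total (dxVal d a x (𝒊 x) (𝒋 x)) (dxVal d a y (𝒊 y) (𝒋 y)) with hxy | hxy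
  · refine .inr fun γ hγ hγ' => ?_
    have := (abs_le.1 (S.symm.abs_dist_sub_dxVal_le (hi ▸ hγ) (hj ▸ hγ'))).1
    rw [max_eq_right hxy] at h
    linarith [h.2]
  · refine .inl fun γ hγ hγ' => ?_
    have := (abs_le.1 (S.abs_dist_sub_dxVal_le hγ hγ')).1
    rw [max_eq_left hxy] at h
    linarith [h.2]

/-- `y ≼ a (k + 1)` fails, so the canonical rules bound `d (a α) (a (k + 1))` through `y`. -/
theorem between_left_of_lt (S : PairContext d ε p₀ q₀ a n x y) {k k' : ℕ}
    (hk : k = 𝒊 x ∨ k = 𝒋 x - 1) (hk' : k' = 𝒊 y ∨ k' = 𝒋 y - 1) (hlt : k < k') {α : ℕ}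
    (hα : α ≤ k) : Between d (6 * ε) (a α) x y := by
  have hd := S.setup.dissim
  have hε := S.setup.eps_nonneg
  have gy := S.symm.index_bounds
  obtain ⟨Hx, k₀, -, hk₀, hP⟩ := S.exists_placed hk
  have hy := ((S.symm.exists_placed hk').1.between_chain_left (by omega : α ≤ k + 1)
    (by omega : k + 1 ≤ k') (by omega)).2
  have hcanon := Canon.dist_le_max_of_not_right (S.setup.chain α (k + 1) (by omega) (by omega)).1
    (S.setup.not_canon_of_lt_jIdx (x := y) (by omega : k + 1 < 𝒋 y))
  have hx := (Hx.between_across hα k.lt_succ_self (by omega)).1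
  refine ⟨?_, ?_⟩
  · have := max_le (by linarith : d (a α) y ≤ d (a α) y + 2 * ε)
      (by linarith [hd.1 y (a (k + 1))] : d y (a (k + 1)) ≤ d (a α) y + 2 * ε)
    linarith
  · rcases hP with P | P
    · linarith [(P.between_left hα (by omega)).2]
    · linarith [(P.between_right k.lt_succ_self (by omega)).1, hd.1 x y, hd.1 y (a (k + 1))]

/-- `a k' ≼ x` fails, so the canonical rules bound `d (a k') (a γ)` through `x`. -/
theorem between_right_of_lt (S : PairContext d ε p₀ q₀ a n x y) {k k' : ℕ}
    (hk : k = 𝒊 x ∨ k = 𝒋 x - 1) (hk' : k' = 𝒊 y ∨ k' = 𝒋 y - 1) (hlt : k < k') {γ : ℕ}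
    (hγ : k' < γ) (hγn : γ < n) : Between d (6 * ε) x y (a γ) := by
  have hd := S.setup.dissim
  have hε := S.setup.eps_nonneg
  have gx := S.index_bounds
  obtain ⟨Hy, k₁, -, hk₁, hP⟩ := S.symm.exists_placed hk'
  have hx := ((S.exists_placed hk).1.between_chain_right hlt hγ.le hγn).1
  have hcanon := Canon.dist_le_max_of_not_left (S.setup.chain k' γ hγ hγn).1
    (not_canon_of_iIdx_lt (x := x) (by omega : 𝒊 x < k') (by omega))
  have hy := (Hy.between_across le_rfl hγ hγn).2
  refine ⟨?_, ?_⟩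
  · rcases hP with P | P
    · linarith [(P.between_left le_rfl (by omega)).2, hd.1 x y, hd.1 x (a k')]
    · exact (P.between_right hγ hγn).1.trans (by linarith)
  · have := max_le (by linarith [hd.1 x (a k')] : d (a k') x ≤ d x (a γ) + 2 * ε)
      (by linarith : d x (a γ) ≤ d x (a γ) + 2 * ε)
    linarith

theorem between_mid_of_lt (S : PairContext d ε p₀ q₀ a n x y) {k k' : ℕ}
    (hk : k = 𝒊 x ∨ k = 𝒋 x - 1) (hk' : k' = 𝒊 y ∨ k' = 𝒋 y - 1) {β : ℕ} (hβ : k < β)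
    (hβ' : β ≤ k') : Between d (6 * ε) x (a β) y := by
  have hd := S.setup.dissim
  have hε := S.setup.eps_nonneg
  have gx := S.index_bounds
  have gy := S.symm.index_bounds
  refine ⟨?_, ?_⟩
  · rcases lt_or_ge β (𝒋 x) with hβj | hβj
    · exact S.dist_inner_le (by omega) hβj
    · obtain ⟨-, k₁, -, hk₁, P | P⟩ := S.symm.exists_placed hk'
      · exact absurd P.1 (by omega)
      · linarith [(P.between_mid (by omega) hβ' (by omega)).1]
  · rcases lt_or_ge (𝒊 y) β with hβi | hβi
    · linarith [S.symm.dist_inner_le hβi (by omega), hd.1 y (a β), hd.1 y x]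
    · obtain ⟨-, k₀, hk₀, hk₀', P | P⟩ := S.exists_placed hk
      · linarith [(P.between_mid hβ (by omega) (by omega)).2]
      · exact absurd P.1 (by omega)

theorem placedPair_of_lt (S : PairContext d ε p₀ q₀ a n x y) {k k' : ℕ}
    (hk : k = 𝒊 x ∨ k = 𝒋 x - 1) (hk' : k' = 𝒊 y ∨ k' = 𝒋 y - 1) (hlt : k < k') :
    PlacedPair d (6 * ε) a n x y k k' := by
  have hε := S.setup.eps_nonneg
  have gy := S.symm.index_bounds
  exact placedPair_of_between S.setup.dissim hε (by linarith) hlt.le (by omega)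
    (S.exists_placed hk).1 (S.symm.exists_placed hk').1 (fun _ => S.between_left_of_lt hk hk' hlt)
    (fun _ hβ hβ' => S.between_mid_of_lt hk hk' hβ hβ') fun _ => S.between_right_of_lt hk hk' hlt

theorem placedPair_of_eq_of_left (S : PairContext d ε p₀ q₀ a n x y) {h k₀ k₁ : ℕ}
    (hhx : h = 𝒊 x ∨ h = 𝒋 x - 1) (hhy : h = 𝒊 y ∨ h = 𝒋 y - 1)
    (P : PlacedPair d ε a n x y h k₀) (hk₀ : k₀ ≤ 𝒋 y - 1)
    (Q : PlacedPair d ε a n y x h k₁) (hk₁ : k₁ ≤ 𝒋 x - 1) :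
    PlacedPair d (6 * ε) a n x y h h ∨ PlacedPair d (6 * ε) a n y x h h := by
  have hd := S.setup.dissim
  have hε := S.setup.eps_nonneg
  have gx := S.index_bounds
  have gy := S.symm.index_bounds
  have Hx := (S.exists_placed hhx).1
  have Hy := (S.symm.exists_placed hhy).1
  have hP := P.1
  have hQ := Q.1
  by_cases hy : k₁ + 1 < 𝒋 y
  · refine .inr (Q.slide_snd hd hε (by omega) Hy Hx fun γ hγ hγ' => ?_)
    linarith [(Q.between_right k₁.lt_succ_self (by omega)).1,
      S.symm.dist_le_of_inner (m := k₁ + 1) (l := γ) (by omega) hy (by omega)]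
  by_cases hx : k₀ + 1 < 𝒋 x
  · refine .inl (P.slide_snd hd hε (by omega) Hx Hy fun γ hγ hγ' => ?_)
    linarith [(P.between_right k₀.lt_succ_self (by omega)).1,
      S.dist_le_of_inner (m := k₀ + 1) (l := γ) (by omega) hx (by omega)]
  rcases hP.eq_or_lt with rfl | hP'
  · exact .inl (P.slide_snd hd hε (by omega) Hx Hy fun γ hγ hγ' => by omega)
  rcases S.inner_dist_ge_or (by omega) (by omega) with hxc | hyc
  · exact .inl (P.slide_snd hd hε (by omega) Hx Hy fun γ hγ hγ' => hxc γ (by omega) (by omega))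
  · refine .inr (Q.slide_snd hd hε (by omega) Hy Hx fun γ hγ hγ' => ?_)
    rw [hd.1 y x]
    exact hyc γ (by omega) (by omega)

theorem placedPair_of_eq_of_right (S : PairContext d ε p₀ q₀ a n x y) {h k₀ k₁ : ℕ}
    (hhx : h = 𝒊 x ∨ h = 𝒋 x - 1) (hhy : h = 𝒊 y ∨ h = 𝒋 y - 1)
    (P : PlacedPair d ε a n y x k₀ h) (hk₀ : 𝒊 y ≤ k₀)
    (Q : PlacedPair d ε a n x y k₁ h) (hk₁ : 𝒊 x ≤ k₁) :
    PlacedPair d (6 * ε) a n x y h h ∨ PlacedPair d (6 * ε) a n y x h h := by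
  have hd := S.setup.dissim
  have hε := S.setup.eps_nonneg
  have gx := S.index_bounds
  have gy := S.symm.index_bounds
  have Hx := (S.exists_placed hhx).1
  have Hy := (S.symm.exists_placed hhy).1
  have hP := P.1
  have hQ := Q.1
  by_cases hy : 𝒊 y < k₁
  · refine .inl (Q.slide_fst hd hε (by omega) Hx Hy fun α hα hα' => ?_)
    linarith [(Q.between_left le_rfl (by omega)).2, hd.1 y (a k₁), hd.1 y (a α),
      S.symm.dist_le_of_inner (m := k₁) (l := α) hy (by omega) (by omega)]
  by_cases hx : 𝒊 x < k₀
  · refine .inr (P.slide_fst hd hε (by omega) Hy Hx fun α hα hα' => ?_)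
    linarith [(P.between_left le_rfl (by omega)).2, hd.1 x (a k₀), hd.1 x (a α),
      S.dist_le_of_inner (m := k₀) (l := α) hx (by omega) (by omega)]
  rcases hQ.eq_or_lt with rfl | hQ'
  · exact .inl (Q.slide_fst hd hε (by omega) Hx Hy fun α hα hα' => by omega)
  rcases S.inner_dist_ge_or (by omega) (by omega) with hxc | hyc
  · refine .inr (P.slide_fst hd hε (by omega) Hy Hx fun α hα hα' => ?_)
    rw [hd.1 y x, hd.1 (a α) x]
    exact hxc α (by omega) (by omega)
  · refine .inl (Q.slide_fst hd hε (by omega) Hx Hy fun α hα hα' => ?_)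
    rw [hd.1 (a α) y]
    exact hyc α (by omega) (by omega)

theorem placedPair_of_eq (S : PairContext d ε p₀ q₀ a n x y) {h : ℕ}
    (hhx : h = 𝒊 x ∨ h = 𝒋 x - 1) (hhy : h = 𝒊 y ∨ h = 𝒋 y - 1) :
    PlacedPair d (6 * ε) a n x y h h ∨ PlacedPair d (6 * ε) a n y x h h := by
  have hd := S.setup.dissim
  have hε := S.setup.eps_nonneg
  have gx := S.index_bounds
  have gy := S.symm.index_bounds
  obtain ⟨Hx, k₀, hk₀, hk₀', P | P⟩ := S.exists_placed hhx <;>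
  obtain ⟨Hy, k₁, hk₁, hk₁', Q | Q⟩ := S.symm.exists_placed hhy
  · exact S.placedPair_of_eq_of_left hhx hhy P hk₀' Q hk₁'
  · exact .inl (P.slide_snd hd hε (by omega) Hx Hy fun γ hγ _ => by
      linarith [(Q.between_right hγ (by omega)).1])
  · exact .inr (Q.slide_snd hd hε (by omega) Hy Hx fun γ hγ _ => by
      linarith [(P.between_right hγ (by omega)).1])
  · exact S.placedPair_of_eq_of_right hhx hhy P hk₀ Q hk₁

theorem pairHoleAdmissible_of_le (S : PairContext d ε p₀ q₀ a n x y) {k k' : ℕ}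
    (hk : k = 𝒊 x ∨ k = 𝒋 x - 1) (hk' : k' = 𝒊 y ∨ k' = 𝒋 y - 1) (hle : k ≤ k') :
    PairHoleAdmissible d ε a n x y k k' 12 := by
  have hε := S.setup.eps_nonneg
  refine ⟨(S.exists_placed hk).1, (S.symm.exists_placed hk').1, ?_⟩
  rcases hle.eq_or_lt with rfl | hlt
  · exact (S.placedPair_of_eq hk hk').imp (·.mono (by linarith)) (·.mono (by linarith))
  · exact .inl ((S.placedPair_of_lt hk hk' hlt).mono (by linarith))

end PairContext
end Pair

theorem pairwise_admissible_twelve_general (d : X → X → ℝ) (ε : ℝ) (p₀ q₀ : X) (a : ℕ → X) (n : ℕ)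
    (hs : RobinsonSetup d ε p₀ q₀ a n)
    (hstand : StandingAssumption d ε p₀ q₀ a n)
    (x y : X) (hne : x ≠ y) (hx : OutsideChain a n x) (hy : OutsideChain a n y)
    (ix jx iy jy : ℕ)
    (hix : ix = iIdx d ε p₀ q₀ a n x) (hjx : jx = jIdx d ε p₀ q₀ a n x)
    (hiy : iy = iIdx d ε p₀ q₀ a n y) (hjy : jy = jIdx d ε p₀ q₀ a n y)
    (hmain : ¬ (ix = iy ∧ jx = jy ∧
      (d x y > max (dxVal d a x ix jx) (dxVal d a y iy jy) + 3 * ε ∨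
        d x y < max (dxVal d a x ix jx) (dxVal d a y iy jy) - 3 * ε))) :
    ∀ k k', (k = ix ∨ k = jx - 1) → (k' = iy ∨ k' = jy - 1) →
      PairHoleAdmissible d ε a n x y k k' 12 := by
  subst hix hjx hiy hjy
  have S : PairContext d ε p₀ q₀ a n x y := ⟨hs, hstand, hne, hx, hy, hmain⟩
  intro k k' hk hk'
  rcases le_total k k' with hle | hle
  · exact S.pairHoleAdmissible_of_le hk hk' hle
  · obtain ⟨Hy, Hx, hP⟩ := S.symm.pairHoleAdmissible_of_le hk' hk hle
    exact ⟨Hx, Hy, hP.symm⟩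

/-- Any location of `x` in a bounding hole of `H(x)` together with any location of `y` in a
bounding hole of `H(y)` is `(x, y, 12)`-admissible, unless `H(x) = H(y)` and
`d x y ≫₃ max d_x d_y` or `d x y ≪₃ max d_x d_y`. -/
theorem pairwise_admissible_twelve (d : X → X → ℝ) (ε : ℝ) (p₀ q₀ : X) (a : ℕ → X) (n : ℕ)
    (hs : RobinsonSetup d ε p₀ q₀ a n)
    (hstand : StandingAssumption d ε p₀ q₀ a n)
    (x y : X) (hne : x ≠ y) (hx : OutsideChain a n x) (hy : OutsideChain a n y)
    (ix jx iy jy : ℕ)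
    (hix : ix = iIdx d ε p₀ q₀ a n x) (hjx : jx = jIdx d ε p₀ q₀ a n x)
    (hiy : iy = iIdx d ε p₀ q₀ a n y) (hjy : jy = jIdx d ε p₀ q₀ a n y)
    (hgapx : ix + 2 ≤ jx) (hgapy : iy + 2 ≤ jy)
    (hmain : ¬ (ix = iy ∧ jx = jy ∧
      (d x y > max (dxVal d a x ix jx) (dxVal d a y iy jy) + 3 * ε ∨
        d x y < max (dxVal d a x ix jx) (dxVal d a y iy jy) - 3 * ε))) :
    ∀ k k', (k = ix ∨ k = jx - 1) → (k' = iy ∨ k' = jy - 1) →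
      PairHoleAdmissible d ε a n x y k k' 12 :=
  pairwise_admissible_twelve_general d ε p₀ q₀ a n hs hstand x y hne hx hy ix jx iy jy hix hjx hiy
    hjy hmain
end

section
/- In the standing setup (canonical partial order ≼, maximal chain P, holes, pair admissibility and the standing assumption), let x,y ∈ X° be distinct with i(x) = i(y) = i, j(x) = j(y) = j, and d(x,y) > max{d_x, d_y} + 3ε. Then every (x,y,1)-admissible pair of holes (H_k, H_{k'}) places x and y in distinct bounding holes: k ≠ k' and {k, k'} = {i, j−1}. -/
open Finset

variable {X : Type*}

section Aux

variable {X : Type*}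

lemma insertSeq_left (a : ℕ → X) (x : X) {k m : ℕ} (h : m ≤ k) :
    insertSeq a x k m = a m := by
  unfold insertSeq; rw [if_pos h]

lemma insertSeq_self (a : ℕ → X) (x : X) (k : ℕ) :
    insertSeq a x k (k + 1) = x := by
  unfold insertSeq; rw [if_neg (by omega), if_pos rfl]

lemma insertSeq_right (a : ℕ → X) (x : X) {k m : ℕ} (h : k + 1 < m) :
    insertSeq a x k m = a (m - 1) := by
  unfold insertSeq; rw [if_neg (by omega), if_neg (by omega)]

/-- If both bounding holes are admissible for `x`, then all distances from `x`
to inner chain points are within `2ε` of each other. -/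
lemma inner_le_inner {d : X → X → ℝ} {ε : ℝ} {a : ℕ → X} {n : ℕ}
    (hsym : ∀ u v, d u v = d v u) {x : X} {i j : ℕ}
    (hij : i + 2 ≤ j) (hjn : j < n)
    (h1 : HoleAdmissible d ε a n x i) (h2 : HoleAdmissible d ε a n x (j - 1)) :
    ∀ m m', i < m → m < j → i < m' → m' < j → d x (a m) ≤ d x (a m') + 2 * ε := by
  intro m m' him hmj him' hm'j
  rcases le_or_gt m m' with hmm | hmm
  · have h := h1 (i + 1) (i + 1) (m + 1) (m' + 1) le_rfl (by omega) (by omega) (by omega)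
    have e1 : insertSeq a x i (i + 1) = x := insertSeq_self a x i
    have e2 : insertSeq a x i (m + 1) = a m := by
      rw [insertSeq_right a x (by omega)]; congr 1
    have e3 : insertSeq a x i (m' + 1) = a m' := by
      rw [insertSeq_right a x (by omega)]; congr 1
    rw [e1, e2, e3] at h
    exact h
  · have h := h2 m' m j j (by omega) (by omega) le_rfl (by omega)
    have e1 : insertSeq a x (j - 1) m = a m := insertSeq_left a x (by omega)
    have e2 : insertSeq a x (j - 1) m' = a m' := insertSeq_left a x (by omega)
    have e3 : insertSeq a x (j - 1) j = x := by
      have : j = (j - 1) + 1 := by omega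
      rw [this]; exact insertSeq_self a x (j - 1)
    rw [e1, e2, e3] at h
    rw [hsym x (a m), hsym x (a m')]
    exact h

/-- Consequently every inner distance is at most `d_x + ε`. -/
lemma inner_le_dxVal {d : X → X → ℝ} {ε : ℝ} {a : ℕ → X} {n : ℕ}
    (hsym : ∀ u v, d u v = d v u) {x : X} {i j : ℕ}
    (hij : i + 2 ≤ j) (hjn : j < n)
    (h1 : HoleAdmissible d ε a n x i) (h2 : HoleAdmissible d ε a n x (j - 1)) :
    ∀ m, i < m → m < j → d x (a m) ≤ dxVal d a x i j + ε := by
  intro m him hmj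
  set S : Set ℝ := {r | ∃ k, i < k ∧ k < j ∧ r = d x (a k)} with hS
  have hSne : S.Nonempty := ⟨d x (a (i + 1)), i + 1, by omega, by omega, rfl⟩
  have hfin : S.Finite := by
    have hsub : S ⊆ (fun k => d x (a k)) '' (Set.Ioo i j) := by
      rintro r ⟨k, hk1, hk2, rfl⟩
      exact ⟨k, ⟨hk1, hk2⟩, rfl⟩
    exact Set.Finite.subset ((Set.finite_Ioo i j).image _) hsub
  have hmem : d x (a m) ∈ S := ⟨m, him, hmj, rfl⟩
  have hsup : d x (a m) ≤ sSup S := le_csSup hfin.bddAbove hmem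
  have hinf : d x (a m) - 2 * ε ≤ sInf S := by
    apply le_csInf hSne
    rintro r ⟨k, hk1, hk2, rfl⟩
    have := inner_le_inner hsym hij hjn h1 h2 m k him hmj hk1 hk2
    linarith
  have : dxVal d a x i j = (sInf S + sSup S) / 2 := rfl
  rw [this]
  linarith

lemma jIdx_lt_n {d : X → X → ℝ} {ε : ℝ} {p₀ q₀ : X} {a : ℕ → X} {n : ℕ}
    (hs : RobinsonSetup d ε p₀ q₀ a n) (x : X) :
    jIdx d ε p₀ q₀ a n x < n := by
  have hne : {j | j < n ∧ Canon d ε p₀ q₀ x (a j)}.Nonempty :=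
    ⟨n - 1, Nat.sub_lt hs.npos one_pos, hs.upper x⟩
  have hmem := Nat.sInf_mem hne
  exact hmem.1

end Aux

/-- If `H(x) = H(y)` and `d x y ≫₃ max d_x d_y`, then every `(x, y, 1)`-admissible pair of
holes places `x` and `y` in distinct bounding holes. -/
theorem strongly_separated_locations (d : X → X → ℝ) (ε : ℝ) (p₀ q₀ : X) (a : ℕ → X) (n : ℕ)
    (hs : RobinsonSetup d ε p₀ q₀ a n)
    (hstand : StandingAssumption d ε p₀ q₀ a n)
    (x y : X) (hne : x ≠ y) (hx : OutsideChain a n x) (hy : OutsideChain a n y)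
    (ix jx iy jy : ℕ)
    (hix : ix = iIdx d ε p₀ q₀ a n x) (hjx : jx = jIdx d ε p₀ q₀ a n x)
    (hiy : iy = iIdx d ε p₀ q₀ a n y) (hjy : jy = jIdx d ε p₀ q₀ a n y)
    (hgapx : ix + 2 ≤ jx) (hgapy : iy + 2 ≤ jy)
    (hii : ix = iy) (hjj : jx = jy)
    (hfar : d x y > max (dxVal d a x ix jx) (dxVal d a y iy jy) + 3 * ε) :
    ∀ k k', ix ≤ k → k ≤ jx - 1 → iy ≤ k' → k' ≤ jy - 1 →
      PairHoleAdmissible d ε a n x y k k' 1 →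
      k ≠ k' ∧ ((k = ix ∧ k' = jx - 1) ∨ (k = jx - 1 ∧ k' = ix)) := by
  have hsym := hs.dissim.1
  have hjxn : jx < n := by rw [hjx]; exact jIdx_lt_n hs x
  have hjyn : jy < n := by rw [hjy]; exact jIdx_lt_n hs y
  -- bounding holes of x and y are admissible (standing assumption)
  obtain ⟨k₁, -, -, hpx1⟩ := hstand x y hne hx hy (iIdx d ε p₀ q₀ a n x) (Or.inl rfl)
  obtain ⟨k₂, -, -, hpx2⟩ := hstand x y hne hx hy (jIdx d ε p₀ q₀ a n x - 1) (Or.inr rfl)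
  obtain ⟨k₃, -, -, hpy1⟩ := hstand y x hne.symm hy hx (iIdx d ε p₀ q₀ a n y) (Or.inl rfl)
  obtain ⟨k₄, -, -, hpy2⟩ := hstand y x hne.symm hy hx (jIdx d ε p₀ q₀ a n y - 1) (Or.inr rfl)
  have hxadm_i : HoleAdmissible d ε a n x ix := by rw [hix]; exact hpx1.1
  have hxadm_j : HoleAdmissible d ε a n x (jx - 1) := by rw [hjx]; exact hpx2.1
  have hyadm_i : HoleAdmissible d ε a n y iy := by rw [hiy]; exact hpy1.1
  have hyadm_j : HoleAdmissible d ε a n y (jy - 1) := by rw [hjy]; exact hpy2.1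
  have Bx : ∀ m, ix < m → m < jx → d x (a m) ≤ dxVal d a x ix jx + ε :=
    inner_le_dxVal hsym hgapx hjxn hxadm_i hxadm_j
  have By : ∀ m, iy < m → m < jy → d y (a m) ≤ dxVal d a y iy jy + ε :=
    inner_le_dxVal hsym hgapy hjyn hyadm_i hyadm_j
  have hmaxx := le_max_left (dxVal d a x ix jx) (dxVal d a y iy jy)
  have hmaxy := le_max_right (dxVal d a x ix jx) (dxVal d a y iy jy)
  have hone : (1 : ℝ) * ε = ε := one_mul ε
  intro k k' hk1 hk2 hk3 hk4 hadm
  rcases hadm.2.2 with ⟨hkk', hcomp⟩ | ⟨hkk', hcomp⟩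
  · -- x placed at k, y at k', k ≤ k'
    have hkix : k = ix := by
      by_contra hki
      have hik : ix < k := lt_of_le_of_ne hk1 (Ne.symm hki)
      have h := hcomp k (k + 1) (k' + 2) (k' + 2) (by omega) (by omega) le_rfl (by omega)
      have eA : insertSeq2 a x y k k' k = a k := by
        unfold insertSeq2; rw [if_pos le_rfl]
      have eB : insertSeq2 a x y k k' (k + 1) = x := by
        unfold insertSeq2; rw [if_neg (by omega), if_pos rfl]
      have eC : insertSeq2 a x y k k' (k' + 2) = y := by
        unfold insertSeq2
        rw [if_neg (by omega), if_neg (by omega), if_neg (by omega), if_pos rfl]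
      rw [eA, eB, eC] at h
      have hby : d y (a k) ≤ dxVal d a y iy jy + ε := By k (by omega) (by omega)
      rw [hsym (a k) y] at h
      rw [hone] at h
      linarith
    have hk'jx : k' = jx - 1 := by
      by_contra hkj
      have hk'lt : k' + 1 < jx := by omega
      have h := hcomp (k + 1) (k + 1) (k' + 2) (k' + 3) le_rfl (by omega) (by omega) (by omega)
      have eB : insertSeq2 a x y k k' (k + 1) = x := by
        unfold insertSeq2; rw [if_neg (by omega), if_pos rfl]
      have eC : insertSeq2 a x y k k' (k' + 2) = y := by
        unfold insertSeq2
        rw [if_neg (by omega), if_neg (by omega), if_neg (by omega), if_pos rfl]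
      have eD : insertSeq2 a x y k k' (k' + 3) = a (k' + 1) := by
        unfold insertSeq2
        rw [if_neg (by omega), if_neg (by omega), if_neg (by omega), if_neg (by omega)]
        congr 1
      rw [eB, eC, eD] at h
      have hbx : d x (a (k' + 1)) ≤ dxVal d a x ix jx + ε := Bx (k' + 1) (by omega) (by omega)
      rw [hone] at h
      linarith
    exact ⟨by omega, Or.inl ⟨hkix, hk'jx⟩⟩
  · -- y placed at k', x at k, k' ≤ k
    have hk'ix : k' = ix := by
      by_contra hki
      have hik : ix < k' := by omega
      have h := hcomp k' (k' + 1) (k + 2) (k + 2) (by omega) (by omega) le_rfl (by omega)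
      have eA : insertSeq2 a y x k' k k' = a k' := by
        unfold insertSeq2; rw [if_pos le_rfl]
      have eB : insertSeq2 a y x k' k (k' + 1) = y := by
        unfold insertSeq2; rw [if_neg (by omega), if_pos rfl]
      have eC : insertSeq2 a y x k' k (k + 2) = x := by
        unfold insertSeq2
        rw [if_neg (by omega), if_neg (by omega), if_neg (by omega), if_pos rfl]
      rw [eA, eB, eC] at h
      have hbx : d x (a k') ≤ dxVal d a x ix jx + ε := Bx k' (by omega) (by omega)
      rw [hsym y x, hsym (a k') x] at h
      rw [hone] at h
      linarith
    have hkjx : k = jx - 1 := by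
      by_contra hkj
      have hklt : k + 1 < jx := by omega
      have h := hcomp (k' + 1) (k' + 1) (k + 2) (k + 3) le_rfl (by omega) (by omega) (by omega)
      have eB : insertSeq2 a y x k' k (k' + 1) = y := by
        unfold insertSeq2; rw [if_neg (by omega), if_pos rfl]
      have eC : insertSeq2 a y x k' k (k + 2) = x := by
        unfold insertSeq2
        rw [if_neg (by omega), if_neg (by omega), if_neg (by omega), if_pos rfl]
      have eD : insertSeq2 a y x k' k (k + 3) = a (k + 1) := by
        unfold insertSeq2
        rw [if_neg (by omega), if_neg (by omega), if_neg (by omega), if_neg (by omega)]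
        congr 1
      rw [eB, eC, eD] at h
      have hby : d y (a (k + 1)) ≤ dxVal d a y iy jy + ε := By (k + 1) (by omega) (by omega)
      rw [hsym y x] at h
      rw [hone] at h
      linarith
    exact ⟨by omega, Or.inr ⟨hkjx, hk'ix⟩⟩
end

section
/- In the standing setup (canonical partial order ≼, maximal chain P, holes, pair admissibility and the standing assumption), let x,y ∈ X° be distinct with i(x) = i(y), j(x) = j(y), and d(x,y) < max{d_x, d_y} − 3ε. Then every (x,y,1)-admissible pair of holes (H_k, H_{k'}) satisfies k = k', i.e., x and y are placed in a common hole that is both x-admissible and y-admissible. -/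
open Finset

variable {X : Type*}

/-- In the insertion order at hole `H i`, distances from `x` to chain points on the right
quasi-increase: a nearer point is bounded by a farther one (up to `2ε`). -/
lemma holeAdm_left_aux {d : X → X → ℝ} {ε : ℝ} {a : ℕ → X} {n : ℕ} {x : X} {i : ℕ}
    (h : HoleAdmissible d ε a n x i) {m m1 : ℕ} (him : i < m) (hmm : m ≤ m1) (hm1 : m1 < n) :
    d x (a m) ≤ d x (a m1) + 2 * ε := by
  have e1 : insertSeq a x i (i + 1) = x := by
    simp only [insertSeq]
    rw [if_neg (by omega)]; simp
  have e2 : ∀ mm : ℕ, i < mm → insertSeq a x i (mm + 1) = a mm := by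
    intro mm hm
    simp only [insertSeq]
    rw [if_neg (by omega), if_neg (by omega)]
    congr 1
  have := h (i + 1) (i + 1) (m + 1) (m1 + 1) le_rfl (by omega) (by omega) (by omega)
  rwa [e1, e2 m him, e2 m1 (lt_of_lt_of_le him hmm)] at this

/-- In the insertion order at hole `H (j-1)`, distances from `x` to chain points on the left
quasi-decrease: a nearer point is bounded by a farther one (up to `2ε`). -/
lemma holeAdm_right_aux {d : X → X → ℝ} {ε : ℝ} {a : ℕ → X} {n : ℕ} {x : X} {j : ℕ}
    (h : HoleAdmissible d ε a n x (j - 1)) (hj : 1 ≤ j) {m0 m : ℕ} (h01 : m0 ≤ m)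
    (hmj : m < j) (hjn : j < n) :
    d (a m) x ≤ d (a m0) x + 2 * ε := by
  have e1 : ∀ mm : ℕ, mm < j → insertSeq a x (j - 1) mm = a mm := by
    intro mm hm
    simp only [insertSeq]
    rw [if_pos (by omega)]
  have e2 : insertSeq a x (j - 1) j = x := by
    simp only [insertSeq]
    rw [if_neg (by omega), if_pos (by omega)]
  have := h m0 m j j h01 (le_of_lt hmj) le_rfl (by omega)
  rwa [e1 m hmj, e1 m0 (lt_of_le_of_lt h01 hmj), e2] at this

/-- If both bounding holes of `x` are `x`-admissible and some inner chain point is within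
`B` of `x`, then `d_x ≤ B + ε`. -/
lemma dxVal_le_of {d : X → X → ℝ} {ε : ℝ} {a : ℕ → X} {n : ℕ} {x : X} {i j : ℕ}
    (hd : IsDissimilarity d) (hε : 0 ≤ ε)
    (hAi : HoleAdmissible d ε a n x i) (hAj : HoleAdmissible d ε a n x (j - 1))
    (hij : i + 2 ≤ j) (hjn : j < n) {m2 : ℕ} (h2a : i < m2) (h2b : m2 < j)
    {B : ℝ} (hB : d x (a m2) ≤ B) :
    dxVal d a x i j ≤ B + ε := by
  obtain ⟨hsymm, hnn, -⟩ := hd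
  set S : Set ℝ := {r | ∃ k, i < k ∧ k < j ∧ r = d x (a k)} with hS
  have hmem : d x (a m2) ∈ S := ⟨m2, h2a, h2b, rfl⟩
  have hbdd : BddBelow S := ⟨0, by rintro r ⟨k, -, -, rfl⟩; exact hnn _ _⟩
  have hinf : sInf S ≤ B := le_trans (csInf_le hbdd hmem) hB
  have hsup : sSup S ≤ B + 2 * ε := by
    apply Real.sSup_le
    · rintro r ⟨m, hma, hmb, rfl⟩
      rcases le_total m m2 with hle | hle
      · have := holeAdm_left_aux hAi hma hle (lt_trans h2b hjn)
        linarith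
      · have := holeAdm_right_aux hAj (by omega) hle hmb hjn
        rw [hsymm (a m) x, hsymm (a m2) x] at this
        linarith
    · have := hnn x (a m2)
      linarith
  have hval : dxVal d a x i j = (sInf S + sSup S) / 2 := rfl
  rw [hval]
  linarith

/-- If `H(x) = H(y)` and `d x y ≪₃ max d_x d_y`, then every `(x, y, 1)`-admissible pair of
holes places `x` and `y` in a common hole which is both `x`- and `y`-admissible. -/
theorem linked_locations (d : X → X → ℝ) (ε : ℝ) (p₀ q₀ : X) (a : ℕ → X) (n : ℕ)
    (hs : RobinsonSetup d ε p₀ q₀ a n)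
    (hstand : StandingAssumption d ε p₀ q₀ a n)
    (x y : X) (hne : x ≠ y) (hx : OutsideChain a n x) (hy : OutsideChain a n y)
    (ix jx iy jy : ℕ)
    (hix : ix = iIdx d ε p₀ q₀ a n x) (hjx : jx = jIdx d ε p₀ q₀ a n x)
    (hiy : iy = iIdx d ε p₀ q₀ a n y) (hjy : jy = jIdx d ε p₀ q₀ a n y)
    (hgapx : ix + 2 ≤ jx) (hgapy : iy + 2 ≤ jy)
    (hii : ix = iy) (hjj : jx = jy)
    (hclose : d x y < max (dxVal d a x ix jx) (dxVal d a y iy jy) - 3 * ε) :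
    ∀ k k', ix ≤ k → k ≤ jx - 1 → iy ≤ k' → k' ≤ jy - 1 →
      PairHoleAdmissible d ε a n x y k k' 1 →
      k = k' ∧ HoleAdmissible d ε a n x k ∧ HoleAdmissible d ε a n y k := by
  obtain ⟨hsymm, hnn, hdiag⟩ := hs.dissim
  have hε := hs.eps_nonneg
  have hjxn : jx < n := by
    have hne' : {j | j < n ∧ Canon d ε p₀ q₀ x (a j)}.Nonempty :=
      ⟨n - 1, by
        refine ⟨?_, hs.upper x⟩
        have := hs.npos
        omega⟩
    have hmem := Nat.sInf_mem hne'
    rw [hjx]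
    exact hmem.1
  have hjyn : jy < n := hjj ▸ hjxn
  have hxlo : HoleAdmissible d ε a n x ix := by
    obtain ⟨k1, -, -, hp⟩ := hstand x y hne hx hy ix (Or.inl hix)
    exact hp.1
  have hxhi : HoleAdmissible d ε a n x (jx - 1) := by
    obtain ⟨k1, -, -, hp⟩ := hstand x y hne hx hy (jx - 1) (Or.inr (by rw [hjx]))
    exact hp.1
  have hylo : HoleAdmissible d ε a n y iy := by
    obtain ⟨k1, -, -, hp⟩ := hstand y x hne.symm hy hx iy (Or.inl hiy)
    exact hp.1
  have hyhi : HoleAdmissible d ε a n y (jy - 1) := by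
    obtain ⟨k1, -, -, hp⟩ := hstand y x hne.symm hy hx (jy - 1) (Or.inr (by rw [hjy]))
    exact hp.1
  intro k k' hk1 hk2 hk3 hk4 hpair
  obtain ⟨hxk, hyk', hor⟩ := hpair
  rcases lt_trichotomy k k' with hlt | heq | hgt
  · exfalso
    have hc : SeqCompatible d (insertSeq2 a x y k k') (n + 2) (1 * ε) := by
      rcases hor with ⟨-, h⟩ | ⟨hle, -⟩
      · exact h
      · omega
    have e_x : insertSeq2 a x y k k' (k + 1) = x := by
      simp only [insertSeq2]
      rw [if_neg (by omega)]; simp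
    have e_a : insertSeq2 a x y k k' (k + 2) = a (k + 1) := by
      simp only [insertSeq2]
      rw [if_neg (by omega), if_neg (by omega), if_pos (by omega)]
      norm_num
    have e_y : insertSeq2 a x y k k' (k' + 2) = y := by
      simp only [insertSeq2]
      rw [if_neg (by omega), if_neg (by omega), if_neg (by omega)]; simp
    have h1 : d x (a (k + 1)) ≤ d x y + 2 * ε := by
      have := hc (k + 1) (k + 1) (k + 2) (k' + 2) le_rfl (by omega) (by omega) (by omega)
      rw [e_x, e_a, e_y] at this
      linarith
    have h2 : d y (a (k + 1)) ≤ d x y + 2 * ε := by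
      have := hc (k + 1) (k + 2) (k' + 2) (k' + 2) (by omega) (by omega) le_rfl (by omega)
      rw [e_x, e_a, e_y] at this
      rw [hsymm (a (k + 1)) y] at this
      linarith
    have hdx : dxVal d a x ix jx ≤ (d x y + 2 * ε) + ε :=
      dxVal_le_of ⟨hsymm, hnn, hdiag⟩ hε hxlo hxhi hgapx hjxn (by omega)
        (by omega) h1
    have hdy : dxVal d a y iy jy ≤ (d x y + 2 * ε) + ε :=
      dxVal_le_of ⟨hsymm, hnn, hdiag⟩ hε hylo hyhi hgapy hjyn (by omega)
        (by omega) h2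
    have hmax : max (dxVal d a x ix jx) (dxVal d a y iy jy) ≤ d x y + 3 * ε :=
      max_le (by linarith) (by linarith)
    linarith
  · refine ⟨heq, hxk, ?_⟩
    rw [heq]
    exact hyk'
  · exfalso
    have hc : SeqCompatible d (insertSeq2 a y x k' k) (n + 2) (1 * ε) := by
      rcases hor with ⟨hle, -⟩ | ⟨-, h⟩
      · omega
      · exact h
    have e_y : insertSeq2 a y x k' k (k' + 1) = y := by
      simp only [insertSeq2]
      rw [if_neg (by omega)]; simp
    have e_a : insertSeq2 a y x k' k (k' + 2) = a (k' + 1) := by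
      simp only [insertSeq2]
      rw [if_neg (by omega), if_neg (by omega), if_pos (by omega)]
      norm_num
    have e_x : insertSeq2 a y x k' k (k + 2) = x := by
      simp only [insertSeq2]
      rw [if_neg (by omega), if_neg (by omega), if_neg (by omega)]; simp
    have h1 : d y (a (k' + 1)) ≤ d x y + 2 * ε := by
      have := hc (k' + 1) (k' + 1) (k' + 2) (k + 2) le_rfl (by omega) (by omega) (by omega)
      rw [e_y, e_a, e_x] at this
      rw [hsymm y x] at this
      linarith
    have h2 : d x (a (k' + 1)) ≤ d x y + 2 * ε := by
      have := hc (k' + 1) (k' + 2) (k + 2) (k + 2) (by omega) (by omega) le_rfl (by omega)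
      rw [e_y, e_a, e_x] at this
      rw [hsymm (a (k' + 1)) x, hsymm y x] at this
      linarith
    have hdx : dxVal d a x ix jx ≤ (d x y + 2 * ε) + ε :=
      dxVal_le_of ⟨hsymm, hnn, hdiag⟩ hε hxlo hxhi hgapx hjxn (by omega)
        (by omega) h2
    have hdy : dxVal d a y iy jy ≤ (d x y + 2 * ε) + ε :=
      dxVal_le_of ⟨hsymm, hnn, hdiag⟩ hε hylo hyhi hgapy hjyn (by omega)
        (by omega) h1
    have hmax : max (dxVal d a x ix jx) (dxVal d a y iy jy) ≤ d x y + 3 * ε :=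
      max_le (by linarith) (by linarith)
    linarith
end

section
/- In the standing setup (canonical partial order ≼, maximal chain P, holes, pair admissibility with the standing assumption, and the sets X_ij), let x,y ∈ X_ij with x ↣ y. Then every linear order ≺ on X that is ε-compatible with d, extends ≼, and satisfies a_{i+1} ≺ x and a_{i+1} ≺ y also satisfies x ≺ y; and every linear order ≺ on X that is ε-compatible with d, extends ≼, and satisfies x ≺ a_{j−1} and y ≺ a_{j−1} also satisfies y ≺ x. -/
open Finset

variable {X : Type*}

/-!
Admissibility of the two bounding holes `H i` and `H (j-1)` of `u ∈ X_ij`, which the standing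
assumption provides once `X_ij` has a second element, forces all the
inner distances `d u (a k)`, `i < k < j`, to lie within `2ε` of each other, hence within `ε`
of their midrange `d_u`. So every inner `a k` sees the elements of `X_ij` at distances
`d_u ± ε`, and both rules for `x ↣ y` produce a triple violating `ε`-compatibility as soon
as `y` is placed between such an anchor `a k` and `x`.
-/

lemma abs_sub_midrange_le {S : Set ℝ} {r c : ℝ} (hr : r ∈ S)
    (h : ∀ s ∈ S, ∀ t ∈ S, s ≤ t + 2 * c) : |r - (sInf S + sSup S) / 2| ≤ c := by
  have hne : S.Nonempty := ⟨r, hr⟩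
  have hsup_le : sSup S ≤ r + 2 * c := csSup_le hne fun s hs => h s hs r hr
  have hle_inf : r - 2 * c ≤ sInf S := le_csInf hne fun s hs => by linarith [h r hr s hs]
  have hle_sup : r ≤ sSup S := le_csSup ⟨r + 2 * c, fun s hs => h s hs r hr⟩ hr
  have hinf_le : sInf S ≤ r := csInf_le ⟨r - 2 * c, fun s hs => by linarith [h r hr s hs]⟩ hr
  rw [abs_le]
  constructor <;> linarith

section Holes

variable {d : X → X → ℝ} {ε : ℝ} {a : ℕ → X} {n : ℕ} {u : X} {k l m : ℕ}

lemma HoleAdmissible.dist_le_of_lower (h : HoleAdmissible d ε a n u k) (hkl : k < l)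
    (hlm : l ≤ m) (hm : m < n) : d u (a l) ≤ d u (a m) + 2 * ε := by
  have key := h (k + 1) (k + 1) (l + 1) (m + 1) le_rfl (by omega) (by omega) (by omega)
  simpa [insertSeq, show ¬ l + 1 ≤ k by omega, show ¬ m + 1 ≤ k by omega,
    show l + 1 ≠ k + 1 by omega, show m + 1 ≠ k + 1 by omega, show l ≠ k by omega,
    show m ≠ k by omega] using key

lemma HoleAdmissible.dist_le_of_upper (h : HoleAdmissible d ε a n u k) (hlm : l ≤ m)
    (hmk : m ≤ k) (hk : k < n) : d (a m) u ≤ d (a l) u + 2 * ε := by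
  have key := h l m (k + 1) (k + 1) hlm (by omega) le_rfl (by omega)
  simpa [insertSeq, show l ≤ k by omega, hmk] using key

lemma abs_dist_sub_dxVal_le (hsym : ∀ x y, d x y = d y x) {i j : ℕ}
    (hlow : HoleAdmissible d ε a n u i) (hup : HoleAdmissible d ε a n u (j - 1))
    (hjn : j ≤ n) (hik : i < k) (hkj : k < j) :
    |d u (a k) - dxVal d a u i j| ≤ ε := by
  refine abs_sub_midrange_le ⟨k, hik, hkj, rfl⟩ ?_
  rintro _ ⟨l, hil, hlj, rfl⟩ _ ⟨m, him, hmj, rfl⟩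
  rcases le_total l m with hlm | hml
  · exact hlow.dist_le_of_lower hil hlm (by omega)
  · rw [hsym u (a l), hsym u (a m)]
    exact hup.dist_le_of_upper hml (by omega) (by omega)

end Holes

section Xij

variable {d : X → X → ℝ} {ε : ℝ} {p₀ q₀ : X} {a : ℕ → X} {n i j : ℕ}

lemma StandingAssumption.holeAdmissible_bounding (hstand : StandingAssumption d ε p₀ q₀ a n)
    {z w : X} (hzw : z ≠ w) (hz : OutsideChain a n z) (hw : OutsideChain a n w) :
    HoleAdmissible d ε a n z (iIdx d ε p₀ q₀ a n z) ∧
      HoleAdmissible d ε a n z (jIdx d ε p₀ q₀ a n z - 1) := by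
  obtain ⟨_, _, _, hlow, _⟩ := hstand z w hzw hz hw _ (Or.inl rfl)
  obtain ⟨_, _, _, hup, _⟩ := hstand z w hzw hz hw _ (Or.inr rfl)
  exact ⟨hlow, hup⟩

lemma InXij.abs_dist_sub_dxVal_le (hsym : ∀ x y, d x y = d y x)
    (hstand : StandingAssumption d ε p₀ q₀ a n) (hjn : j ≤ n) {u w : X}
    (hu : InXij d ε p₀ q₀ a n i j u) (hw : OutsideChain a n w) (huw : u ≠ w) {k : ℕ}
    (hik : i < k) (hkj : k < j) : |d u (a k) - dxVal d a u i j| ≤ ε := by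
  obtain ⟨hout, rfl, rfl⟩ := hu
  obtain ⟨hlow, hup⟩ := hstand.holeAdmissible_bounding huw hout hw
  exact abs_dist_sub_dxVal_le hsym hlow hup hjn hik hkj

lemma ArrowRel.ne (hε : 0 ≤ ε) {x y : X} (h : ArrowRel d ε p₀ q₀ a n i j x y) : x ≠ y := by
  rintro rfl
  rcases h with h | ⟨-, _, -, -, -, h⟩ <;> linarith

lemma ArrowRel.anchor_gap (hε : 0 ≤ ε) (hsym : ∀ x y, d x y = d y x) {b x y : X}
    (hb : ∀ z, InXij d ε p₀ q₀ a n i j z → |d z b - dxVal d a z i j| ≤ ε)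
    (hx : InXij d ε p₀ q₀ a n i j x) (hy : InXij d ε p₀ q₀ a n i j y)
    (h : ArrowRel d ε p₀ q₀ a n i j x y) :
    d b x + 2 * ε < d b y ∨ ∃ z, d z x + 2 * ε < d z y ∧ d b z + 2 * ε < d y z := by
  rcases h with hA1 | ⟨-, z, hz, hxz, -, hA2⟩
  · left
    have hbx := abs_le.mp (hb x hx)
    have hby := abs_le.mp (hb y hy)
    rw [hsym b x, hsym b y]
    linarith [hbx.2, hby.1]
  · right
    refine ⟨z, ?_, ?_⟩
    · rw [hsym z x, hsym z y]
      linarith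
    · have hbz := abs_le.mp (hb z hz)
      have hxz' : dxVal d a z i j - 3 * ε ≤ d x z :=
        (sub_le_sub_right (le_max_right _ _) _).trans (not_lt.mp hxz)
      rw [hsym b z]
      linarith [hbz.2]

end Xij

section Orders

variable {d : X → X → ℝ} {ε : ℝ}

lemma EpsCompatible.flip {le : X → X → Prop} (hsym : ∀ x y, d x y = d y x)
    (hc : EpsCompatible d le ε) : EpsCompatible d (flip le) ε := by
  intro x u v y hxu huv hvy
  rw [hsym u v, hsym x y]
  exact hc y v u x hvy huv hxu

lemma EpsCompatible.le_of_anchor_gap {le : X → X → Prop} (htot : Std.Total le)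
    (hc : EpsCompatible d le ε) {b x y : X} (hby : le b y)
    (hgap : d b x + 2 * ε < d b y ∨ ∃ z, d z x + 2 * ε < d z y ∧ d b z + 2 * ε < d y z) :
    le x y := by
  refine (htot.total x y).resolve_right fun hyx => ?_
  have hrefl (u : X) : le u u := (htot.total u u).elim id id
  rcases hgap with h | ⟨z, hzx, hyz⟩
  · linarith [hc b b y x (hrefl b) hby hyx]
  · rcases htot.total z y with hzy | hyz'
    · linarith [hc z z y x (hrefl z) hzy hyx]
    · linarith [hc b y z z hby hyz' (hrefl z)]

end Orders

/-- If `x, y ∈ X_ij` with `x ↣ y`, then `x ≺ y` in every `ε`-compatible linear order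
extending `≼` with `a (i+1) ≺ {x, y}`, and `y ≺ x` in every `ε`-compatible linear order
extending `≼` with `{x, y} ≺ a (j-1)`. -/
theorem arrow_forces_order (d : X → X → ℝ) (ε : ℝ) (p₀ q₀ : X) (a : ℕ → X) (n : ℕ)
    (hs : RobinsonSetup d ε p₀ q₀ a n)
    (hstand : StandingAssumption d ε p₀ q₀ a n)
    (i j : ℕ) (hij : i + 2 ≤ j) (hj : j < n)
    (x y : X) (hx : InXij d ε p₀ q₀ a n i j x) (hy : InXij d ε p₀ q₀ a n i j y)
    (hxy : ArrowRel d ε p₀ q₀ a n i j x y) :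
    (∀ le : X → X → Prop, IsLinearOrder X le → EpsCompatible d le ε →
      (∀ u v, Canon d ε p₀ q₀ u v → le u v) →
      le (a (i + 1)) x → a (i + 1) ≠ x → le (a (i + 1)) y → a (i + 1) ≠ y →
      le x y ∧ x ≠ y) ∧
    (∀ le : X → X → Prop, IsLinearOrder X le → EpsCompatible d le ε →
      (∀ u v, Canon d ε p₀ q₀ u v → le u v) →
      le x (a (j - 1)) → x ≠ a (j - 1) → le y (a (j - 1)) → y ≠ a (j - 1) →
      le y x ∧ y ≠ x) := by
  have hsym := hs.dissim.1
  have hne : x ≠ y := hxy.ne hs.eps_nonneg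
  have hanchor {k : ℕ} (hik : i < k) (hkj : k < j) :
      d (a k) x + 2 * ε < d (a k) y ∨
        ∃ z, d z x + 2 * ε < d z y ∧ d (a k) z + 2 * ε < d y z := by
    refine hxy.anchor_gap hs.eps_nonneg hsym (fun z hz => ?_) hx hy
    obtain ⟨w, hw, hzw⟩ : ∃ w, OutsideChain a n w ∧ z ≠ w := by
      by_cases hzx : z = x
      · exact ⟨y, hy.1, hzx ▸ hne⟩
      · exact ⟨x, hx.1, hzx⟩
    exact hz.abs_dist_sub_dxVal_le hsym hstand hj.le hw hzw hik hkj
  refine ⟨fun le hlin hc _ _ _ hby _ => ⟨?_, hne⟩,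
    fun le hlin hc _ _ _ hyb _ => ⟨?_, hne.symm⟩⟩
  · exact hc.le_of_anchor_gap hlin.toTotal hby (hanchor (by omega) (by omega))
  · exact (hc.flip hsym).le_of_anchor_gap ⟨fun u v => hlin.total v u⟩ hyb
      (hanchor (by omega) (by omega))
end
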